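/- arXiv:1202.2585 — 7 statements merged into one kernel-verified Lean document; each statement's English description precedes it below -/
import Mathlib

section
/- Let (S_m)_{m=0}^n be a positive martingale with S_0 = 1 satisfying E[(S_{m+1} − S_m)² | F_m] = (exp(c/n) − 1)·S_m² a.s., and let g : [0,∞) → [0,∞) be L-Lipschitz with g(0) = 0. Then for every M > 0, |E[g(S_n)] − E[min(g(S_n), M)]| ≤ L^{3/2}·exp(c/2)/√M. In particular E[min(g(S_n), M)] → E[g(S_n)] as M → ∞ uniformly in n. -/
open MeasureTheory ProbabilityTheory Real Set

/-!
Truncating at `M` only changes `g (S n)` where `M < g (S n) ≤ L * S n`, and there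
`g (S n) ≤ L * S n * √(L * S n / M)`. Hence the error is at most `L ^ (3/2) / √M * E[S n ^ (3/2)]`,
and by Cauchy–Schwarz `E[S n ^ (3/2)] ≤ √(E[S n]) * √(E[S n ^ 2])`. Here `E[S n] = 1`, and since
martingale increments are orthogonal, `E[S (m+1) ^ 2] = E[S m ^ 2] + E[(S (m+1) - S m) ^ 2]
= exp (c/n) * E[S m ^ 2]`, so `E[S n ^ 2] = exp c`.
-/

lemma LipschitzOnWith.abs_le_mul_of_map_zero {K : NNReal} {g : ℝ → ℝ}
    (hg : LipschitzOnWith K g (Ici 0)) (hg0 : g 0 = 0) {x : ℝ} (hx : 0 ≤ x) :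
    |g x| ≤ K * x := by
  simpa [Real.dist_eq, hg0, abs_of_nonneg hx] using hg.dist_le_mul x hx 0 self_mem_Ici

lemma LipschitzOnWith.integrable_comp_of_nonneg {Ω : Type*} {mΩ : MeasurableSpace Ω}
    {μ : Measure Ω} {K : NNReal} {g : ℝ → ℝ} (hg : LipschitzOnWith K g (Ici 0)) (hg0 : g 0 = 0)
    {X : Ω → ℝ} (hX : Integrable X μ) (hX0 : 0 ≤ᵐ[μ] X) :
    Integrable (fun ω => g (X ω)) μ := by
  have hcont : Continuous fun x => g (max x 0) :=
    hg.continuousOn.comp_continuous (continuous_id.max continuous_const) fun x => le_max_right x 0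
  have heq : (fun ω => g (max (X ω) 0)) =ᵐ[μ] fun ω => g (X ω) := by
    filter_upwards [hX0] with ω (hω : 0 ≤ X ω) using by rw [max_eq_left hω]
  refine Integrable.congr ?_ heq
  refine (hX.const_mul K).mono' (hcont.comp_aestronglyMeasurable hX.1) ?_
  filter_upwards [hX0] with ω (hω : 0 ≤ X ω)
  simpa [max_eq_left hω] using hg.abs_le_mul_of_map_zero hg0 hω

lemma sub_min_le_rpow_div_sqrt_mul {x y L M : ℝ} (hx : 0 ≤ x) (hL : 0 ≤ L) (hM : 0 < M)
    (hy : y ≤ L * x) : y - min y M ≤ L ^ (3 / 2 : ℝ) / √M * (√x * x) := by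
  rcases le_or_gt y M with hyM | hMy
  · rw [min_eq_left hyM, sub_self]
    positivity
  · have hL32 : L ^ (3 / 2 : ℝ) = L * √L := by
      rw [show (3 / 2 : ℝ) = 1 + 1 / 2 by norm_num, Real.rpow_add' hL (by norm_num),
        Real.rpow_one, Real.sqrt_eq_rpow]
    have hsqrt : √M ≤ √L * √x := by
      rw [← Real.sqrt_mul hL]
      exact Real.sqrt_le_sqrt (hMy.le.trans hy)
    rw [min_eq_right hMy.le, hL32, div_mul_eq_mul_div, le_div_iff₀ (Real.sqrt_pos.2 hM)]
    calc (y - M) * √M ≤ L * x * (√L * √x) := by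
          gcongr
          linarith
      _ = L * √L * (√x * x) := by ring

section Moments

variable {Ω : Type*} {mΩ : MeasurableSpace Ω} {μ : Measure Ω}

lemma MeasureTheory.Integrable.memLp_two_sqrt {X : Ω → ℝ} (hX : Integrable X μ)
    (hX0 : 0 ≤ᵐ[μ] X) : MemLp (fun ω => √(X ω)) 2 μ := by
  refine (memLp_two_iff_integrable_sq
    (Real.continuous_sqrt.comp_aestronglyMeasurable hX.1)).2 (hX.congr ?_)
  filter_upwards [hX0] with ω hω using (Real.sq_sqrt hω).symm

lemma integral_sqrt_mul_le [IsFiniteMeasure μ] {X : Ω → ℝ} (hX0 : 0 ≤ᵐ[μ] X)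
    (hX : MemLp X 2 μ) :
    ∫ ω, √(X ω) * X ω ∂μ ≤ √(∫ ω, X ω ∂μ) * √(∫ ω, X ω ^ 2 ∂μ) := by
  have hsqrt := (hX.integrable one_le_two).memLp_two_sqrt hX0
  have hcs := integral_mul_le_Lp_mul_Lq_of_nonneg Real.HolderConjugate.two_two
    (Filter.Eventually.of_forall fun ω => Real.sqrt_nonneg (X ω)) hX0
    (by simpa using hsqrt) (by simpa using hX)
  have hsq : ∫ ω, √(X ω) ^ (2 : ℝ) ∂μ = ∫ ω, X ω ∂μ := by
    refine integral_congr_ae ?_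
    filter_upwards [hX0] with ω hω
    rw [Real.rpow_two, Real.sq_sqrt hω]
  rw [hsq] at hcs
  simp only [Real.rpow_two] at hcs
  simpa only [Real.sqrt_eq_rpow, one_div] using hcs

lemma abs_integral_sub_integral_min_le [IsFiniteMeasure μ] {X Y : Ω → ℝ} {L M : ℝ}
    (hL : 0 ≤ L) (hM : 0 < M) (hX0 : 0 ≤ᵐ[μ] X) (hX : MemLp X 2 μ) (hY : Integrable Y μ)
    (hYX : ∀ᵐ ω ∂μ, Y ω ≤ L * X ω) :
    |∫ ω, Y ω ∂μ - ∫ ω, min (Y ω) M ∂μ|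
      ≤ L ^ (3 / 2 : ℝ) / √M * (√(∫ ω, X ω ∂μ) * √(∫ ω, X ω ^ 2 ∂μ)) := by
  have hmin : Integrable (fun ω => min (Y ω) M) μ := hY.inf (integrable_const M)
  have hprod : Integrable (fun ω => √(X ω) * X ω) μ :=
    ((hX.integrable one_le_two).memLp_two_sqrt hX0).integrable_mul hX
  rw [abs_of_nonneg (sub_nonneg.2 (integral_mono hmin hY fun ω => min_le_left _ _)),
    ← integral_sub hY hmin]
  calc ∫ ω, (Y ω - min (Y ω) M) ∂μ
      ≤ ∫ ω, L ^ (3 / 2 : ℝ) / √M * (√(X ω) * X ω) ∂μ := by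
        refine integral_mono_ae (hY.sub hmin) (hprod.const_mul _) ?_
        filter_upwards [hX0, hYX] with ω hω hωY
        exact sub_min_le_rpow_div_sqrt_mul hω hL hM hωY
    _ ≤ _ := by
        rw [integral_const_mul]
        gcongr
        exact integral_sqrt_mul_le hX0 hX

/-- The conditional expectation of a non-integrable function is the junk value `0`. -/
lemma integrable_of_ae_pos_condExp [NeZero μ] {m : MeasurableSpace Ω} {f : Ω → ℝ}
    (hf : ∀ᵐ ω ∂μ, 0 < μ[f | m] ω) : Integrable f μ := by
  by_contra hnot
  rw [condExp_of_not_integrable hnot] at hf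
  obtain ⟨ω, hω⟩ := hf.exists
  exact lt_irrefl _ hω

end Moments

namespace MeasureTheory.Martingale

variable {Ω : Type*} {mΩ : MeasurableSpace Ω} {μ : Measure Ω} {ℱ : Filtration ℕ mΩ}
  {S : ℕ → Ω → ℝ}

lemma integral_sq_eq_add_integral_sq_sub [IsFiniteMeasure μ] (hS : Martingale S ℱ μ) {i j : ℕ}
    (hij : i ≤ j) (hi : MemLp (S i) 2 μ) (hji : MemLp (S j - S i) 2 μ) :
    ∫ ω, S j ω ^ 2 ∂μ = ∫ ω, S i ω ^ 2 ∂μ + ∫ ω, (S j ω - S i ω) ^ 2 ∂μ := by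
  have hcross_int : Integrable (S i * (S j - S i)) μ := hi.integrable_mul hji
  have hincr : μ[S j - S i | ℱ i] =ᵐ[μ] 0 := by
    filter_upwards [condExp_sub (m := ℱ i) (hS.integrable j) (hS.integrable i),
      hS.condExp_ae_eq hij, hS.condExp_ae_eq (le_refl i)] with ω hsub hj hii
    simp [hsub, hj, hii]
  have hcross : ∫ ω, (S i * (S j - S i)) ω ∂μ = 0 := by
    rw [← integral_condExp (ℱ.le i)]
    refine integral_eq_zero_of_ae ?_
    filter_upwards [condExp_mul_of_stronglyMeasurable_left (hS.stronglyAdapted i) hcross_int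
      ((hS.integrable j).sub (hS.integrable i)), hincr] with ω h h0
    simp [h, h0]
  have hexpand : (fun ω => S j ω ^ 2)
      = fun ω => S i ω ^ 2 + (2 * (S i * (S j - S i)) ω + (S j ω - S i ω) ^ 2) := by
    ext ω; simp only [Pi.mul_apply, Pi.sub_apply]; ring
  have hincr_sq : Integrable (fun ω => (S j ω - S i ω) ^ 2) μ := hji.integrable_sq
  rw [hexpand, integral_add hi.integrable_sq (by exact (hcross_int.const_mul 2).add hincr_sq),
    integral_add (hcross_int.const_mul 2) hincr_sq, integral_const_mul, hcross]
  ring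

lemma integral_eq_integral_zero [IsFiniteMeasure μ] (hS : Martingale S ℱ μ) (m : ℕ) :
    ∫ ω, S m ω ∂μ = ∫ ω, S 0 ω ∂μ := by
  rw [← integral_condExp (ℱ.le 0)]
  exact integral_congr_ae (hS.condExp_ae_eq m.zero_le)

lemma memLp_two_and_integral_sq_eq_pow [IsProbabilityMeasure μ]
    (hS : Martingale S ℱ μ) (hS0 : ∀ᵐ ω ∂μ, S 0 ω = 1) {r : ℝ} {n : ℕ}
    (hvar : ∀ m < n, μ[fun ω => (S (m + 1) ω - S m ω) ^ 2 | ℱ m]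
      =ᵐ[μ] fun ω => (r - 1) * S m ω ^ 2)
    (hincr : ∀ m < n, Integrable (fun ω => (S (m + 1) ω - S m ω) ^ 2) μ) :
    ∀ m ≤ n, MemLp (S m) 2 μ ∧ ∫ ω, S m ω ^ 2 ∂μ = r ^ m := by
  intro m
  induction m with
  | zero =>
    intro _
    refine ⟨(memLp_const 1).ae_eq (hS0.mono fun ω h => h.symm), ?_⟩
    have hsq0 : (fun ω => S 0 ω ^ 2) =ᵐ[μ] fun _ => (1 : ℝ) :=
      hS0.mono fun ω h => by simp [h]
    simp [integral_congr_ae hsq0]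
  | succ k ih =>
    intro hk
    obtain ⟨hL2, hsq⟩ := ih (Nat.le_of_succ_le hk)
    have hΔ : MemLp (S (k + 1) - S k) 2 μ :=
      (memLp_two_iff_integrable_sq ((hS.integrable _).sub (hS.integrable k)).1).2 (hincr k hk)
    have hΔsq : ∫ ω, (S (k + 1) ω - S k ω) ^ 2 ∂μ = (r - 1) * r ^ k := by
      rw [← integral_condExp (ℱ.le k), integral_congr_ae (hvar k hk), integral_const_mul, hsq]
    refine ⟨by simpa using hΔ.add hL2, ?_⟩
    rw [hS.integral_sq_eq_add_integral_sq_sub k.le_succ hL2 hΔ, hsq, hΔsq]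
    ring

end MeasureTheory.Martingale

theorem stmt3_general {Ω : Type*} {mΩ : MeasurableSpace Ω} (μ : Measure Ω) [IsProbabilityMeasure μ]
    (n : ℕ) (hn : 0 < n) (c : ℝ) (hc : 0 < c)
    (ℱ : Filtration ℕ mΩ) (S : ℕ → Ω → ℝ)
    (hmart : Martingale S ℱ μ)
    (hS0 : ∀ ω, S 0 ω = 1)
    (hpos : ∀ m, ∀ᵐ ω ∂μ, 0 < S m ω)
    (hvar : ∀ m < n, μ[fun ω => (S (m+1) ω - S m ω)^2 | ℱ m]
        =ᵐ[μ] fun ω => (Real.exp (c / n) - 1) * (S m ω)^2)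
    (L : ℝ) (hL : 0 < L) (g : ℝ → ℝ)
    (hg0 : g 0 = 0)
    (hglip : LipschitzOnWith (Real.toNNReal L) g (Set.Ici 0)) :
    ∀ M > (0:ℝ), |(∫ ω, g (S n ω) ∂μ) - ∫ ω, min (g (S n ω)) M ∂μ|
      ≤ L ^ ((3:ℝ)/2) * Real.exp (c/2) / Real.sqrt M := by
  intro M hM
  have hS0ae : ∀ᵐ ω ∂μ, S 0 ω = 1 := .of_forall hS0
  have hSn0 : 0 ≤ᵐ[μ] S n := (hpos n).mono fun ω hω => hω.le
  have hincr : ∀ m < n, Integrable (fun ω => (S (m + 1) ω - S m ω) ^ 2) μ := by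
    intro m hm
    have hn' : (0 : ℝ) < n := by exact_mod_cast m.zero_le.trans_lt hm
    have hr : 1 < exp (c / n) := one_lt_exp_iff.2 (div_pos hc hn')
    refine integrable_of_ae_pos_condExp (m := ℱ m) ?_
    filter_upwards [hvar m hm, hpos m] with ω h hω
    rw [h]
    exact mul_pos (sub_pos.2 hr) (pow_pos hω 2)
  obtain ⟨hL2, hsq⟩ := hmart.memLp_two_and_integral_sq_eq_pow hS0ae hvar hincr n le_rfl
  have hmean : ∫ ω, S n ω ∂μ = 1 := by
    rw [hmart.integral_eq_integral_zero, integral_congr_ae hS0ae]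
    simp
  have hgS : ∀ᵐ ω ∂μ, g (S n ω) ≤ L * S n ω := by
    filter_upwards [hSn0] with ω hω
    simpa [Real.coe_toNNReal L hL.le] using
      (le_abs_self _).trans (hglip.abs_le_mul_of_map_zero hg0 hω)
  calc _ ≤ L ^ (3 / 2 : ℝ) / √M * (√(∫ ω, S n ω ∂μ) * √(∫ ω, S n ω ^ 2 ∂μ)) :=
        abs_integral_sub_integral_min_le hL.le hM hSn0 hL2
          (hglip.integrable_comp_of_nonneg hg0 (hmart.integrable n) hSn0) hgS
    _ = L ^ ((3:ℝ)/2) * Real.exp (c/2) / Real.sqrt M := by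
        rw [hmean, hsq, ← Real.exp_nat_mul, mul_div_cancel₀ c (by positivity), ← exp_half]
        simp only [Real.sqrt_one]
        ring

theorem stmt3 {Ω : Type*} {mΩ : MeasurableSpace Ω} (μ : Measure Ω) [IsProbabilityMeasure μ]
    (n : ℕ) (hn : 0 < n) (c : ℝ) (hc : 0 < c)
    (ℱ : Filtration ℕ mΩ) (S : ℕ → Ω → ℝ)
    (hmart : Martingale S ℱ μ)
    (hS0 : ∀ ω, S 0 ω = 1)
    (hpos : ∀ m, ∀ᵐ ω ∂μ, 0 < S m ω)
    (hvar : ∀ m < n, μ[fun ω => (S (m+1) ω - S m ω)^2 | ℱ m]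
        =ᵐ[μ] fun ω => (Real.exp (c / n) - 1) * (S m ω)^2)
    (L : ℝ) (hL : 0 < L) (g : ℝ → ℝ)
    (hg0 : g 0 = 0) (hgnn : ∀ x ≥ (0:ℝ), 0 ≤ g x)
    (hglip : LipschitzOnWith (Real.toNNReal L) g (Set.Ici 0)) :
    ∀ M > (0:ℝ), |(∫ ω, g (S n ω) ∂μ) - ∫ ω, min (g (S n ω)) M ∂μ|
      ≤ L ^ ((3:ℝ)/2) * Real.exp (c/2) / Real.sqrt M :=
  stmt3_general μ n hn c hc ℱ S hmart hS0 hpos hvar L hL g hg0 hglip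
end

section
/- Let T be a random variable with |T| ≤ ζ a.s. where 0 < ζ < 1/2, E[T] = 0, and E[T²] = exp(c/n) − 1 for some c > 0 and n ∈ ℕ large enough that exp(c/n) − 1 ≤ 2c/n, exp(c/n) − 1 − c/n ≤ 2c²/n², and 3(1 − ζ) ≥ 1. Then |E[log(1 + T)] + c/(2n)| ≤ 2cζ/n + c²/n². -/
/-!
On `[-ζ, ζ]` with `ζ < 1`, the Taylor remainder `R x = log (1 + x) - x + x ^ 2 / 2` has derivative
`x ^ 2 / (1 + x) ∈ [0, x ^ 2 / (1 - ζ)]`, so comparing `R` with `0` and with `x ^ 3 / (3 (1 - ζ))`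
gives `|R x| ≤ |x| ^ 3 / (3 (1 - ζ)) ≤ ζ x ^ 2` once `3 (1 - ζ) ≥ 1`. Integrating,
`E[log (1 + T)] = E[T] - E[T²] / 2 + E[R(T)]` with `|E[R(T)]| ≤ ζ E[T²]`; with `E[T] = 0` and
`E[T²] = e^{c/n} - 1` the main term `-(e^{c/n} - 1) / 2` is within `c² / n²` of `-c / (2n)`.
-/

open MeasureTheory ProbabilityTheory Real

namespace Real

lemma hasDerivAt_log_one_add_sub_add_sq_div_two {t : ℝ} (ht : -1 < t) :
    HasDerivAt (fun y => log (1 + y) - y + y ^ 2 / 2) (t ^ 2 / (1 + t)) t := by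
  have h0 : 1 + t ≠ 0 := by linarith
  have hlog : HasDerivAt (fun y => log (1 + y)) (1 / (1 + t)) t := by
    simpa [Function.comp_def] using (hasDerivAt_log h0).comp t ((hasDerivAt_id t).const_add 1)
  have hsq : HasDerivAt (fun y : ℝ => y ^ 2 / 2) t t := by
    simpa using (hasDerivAt_pow 2 t).div_const 2
  refine ((hlog.sub (hasDerivAt_id t)).add hsq).congr_deriv ?_
  field_simp
  ring

variable {ζ : ℝ}

lemma monotoneOn_log_one_add_sub_add_sq_div_two (hζ : ζ < 1) :
    MonotoneOn (fun y => log (1 + y) - y + y ^ 2 / 2) (Set.Icc (-ζ) ζ) := by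
  refine monotoneOn_of_hasDerivWithinAt_nonneg (f' := fun t => t ^ 2 / (1 + t))
    (convex_Icc _ _) (fun y hy => ?_) (fun t ht => ?_) (fun t ht => ?_)
  · exact (hasDerivAt_log_one_add_sub_add_sq_div_two (by linarith [hy.1])).continuousAt
      |>.continuousWithinAt
  · rw [interior_Icc] at ht
    exact (hasDerivAt_log_one_add_sub_add_sq_div_two (by linarith [ht.1])).hasDerivWithinAt
  · rw [interior_Icc] at ht
    have : 0 < 1 + t := by linarith [ht.1]
    positivity

lemma antitoneOn_log_one_add_sub_add_sq_div_two_sub_cube (hζ : ζ < 1) :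
    AntitoneOn (fun y => log (1 + y) - y + y ^ 2 / 2 - y ^ 3 / (3 * (1 - ζ)))
      (Set.Icc (-ζ) ζ) := by
  have hcube (t : ℝ) : HasDerivAt (fun y : ℝ => y ^ 3 / (3 * (1 - ζ))) (t ^ 2 / (1 - ζ)) t := by
    refine ((hasDerivAt_pow 3 t).div_const _).congr_deriv ?_
    field_simp
    ring
  refine antitoneOn_of_hasDerivWithinAt_nonpos
    (f' := fun t => t ^ 2 / (1 + t) - t ^ 2 / (1 - ζ)) (convex_Icc _ _) (fun y hy => ?_)
    (fun t ht => ?_) (fun t ht => ?_)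
  · exact ((hasDerivAt_log_one_add_sub_add_sq_div_two (by linarith [hy.1])).sub
      (hcube y)).continuousAt.continuousWithinAt
  · rw [interior_Icc] at ht
    exact ((hasDerivAt_log_one_add_sub_add_sq_div_two (by linarith [ht.1])).sub
      (hcube t)).hasDerivWithinAt
  · rw [interior_Icc] at ht
    have : t ^ 2 / (1 + t) ≤ t ^ 2 / (1 - ζ) :=
      div_le_div_of_nonneg_left (sq_nonneg t) (by linarith) (by linarith [ht.1])
    linarith

lemma abs_log_one_add_sub_add_sq_div_two_le {x : ℝ} (hx : |x| ≤ ζ) (hζ : ζ < 1) :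
    |log (1 + x) - x + x ^ 2 / 2| ≤ |x| ^ 3 / (3 * (1 - ζ)) := by
  have hxmem : x ∈ Set.Icc (-ζ) ζ := abs_le.mp hx
  have hζ0 : 0 ≤ ζ := (abs_nonneg x).trans hx
  have h0mem : (0 : ℝ) ∈ Set.Icc (-ζ) ζ := ⟨by linarith, hζ0⟩
  have hmono := monotoneOn_log_one_add_sub_add_sq_div_two hζ
  have hanti := antitoneOn_log_one_add_sub_add_sq_div_two_sub_cube hζ
  rcases le_or_gt 0 x with hx0 | hx0
  · have hlow : 0 ≤ log (1 + x) - x + x ^ 2 / 2 := by simpa using hmono h0mem hxmem hx0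
    have hupp : log (1 + x) - x + x ^ 2 / 2 - x ^ 3 / (3 * (1 - ζ)) ≤ 0 := by
      simpa using hanti h0mem hxmem hx0
    rw [abs_of_nonneg hlow, abs_of_nonneg hx0]
    linarith
  · have hupp : log (1 + x) - x + x ^ 2 / 2 ≤ 0 := by simpa using hmono hxmem h0mem hx0.le
    have hlow : 0 ≤ log (1 + x) - x + x ^ 2 / 2 - x ^ 3 / (3 * (1 - ζ)) := by
      simpa using hanti hxmem h0mem hx0.le
    rw [abs_of_nonpos hupp, abs_of_neg hx0, Odd.neg_pow (by decide), neg_div]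
    linarith

lemma abs_log_one_add_sub_add_sq_div_two_le_mul_sq {x : ℝ} (hx : |x| ≤ ζ)
    (hζ : 1 ≤ 3 * (1 - ζ)) : |log (1 + x) - x + x ^ 2 / 2| ≤ ζ * x ^ 2 :=
  calc |log (1 + x) - x + x ^ 2 / 2| ≤ |x| ^ 3 / (3 * (1 - ζ)) :=
        abs_log_one_add_sub_add_sq_div_two_le hx (by linarith)
    _ ≤ |x| ^ 3 := div_le_self (by positivity) hζ
    _ = |x| * x ^ 2 := by rw [pow_succ', sq_abs]
    _ ≤ ζ * x ^ 2 := by gcongr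

end Real

lemma abs_integral_log_one_add_sub_le {Ω : Type*} {mΩ : MeasurableSpace Ω} {μ : Measure Ω}
    [IsFiniteMeasure μ] {T : Ω → ℝ} (hT : AEMeasurable T μ) {ζ : ℝ}
    (hbound : ∀ᵐ ω ∂μ, |T ω| ≤ ζ) (hζ : 1 ≤ 3 * (1 - ζ)) :
    |(∫ ω, log (1 + T ω) ∂μ) - (∫ ω, T ω ∂μ) + (∫ ω, T ω ^ 2 ∂μ) / 2|
      ≤ ζ * ∫ ω, T ω ^ 2 ∂μ := by
  set R : Ω → ℝ := fun ω => log (1 + T ω) - T ω + T ω ^ 2 / 2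
  have hR : ∀ᵐ ω ∂μ, ‖R ω‖ ≤ ζ * T ω ^ 2 := by
    filter_upwards [hbound] with ω hω
    exact abs_log_one_add_sub_add_sq_div_two_le_mul_sq hω hζ
  have intT : Integrable T μ :=
    .of_bound hT.aestronglyMeasurable ζ (by simpa only [norm_eq_abs] using hbound)
  have intT2 : Integrable (fun ω => T ω ^ 2) μ := by
    refine .of_bound (hT.pow_const 2).aestronglyMeasurable (ζ ^ 2) ?_
    filter_upwards [hbound] with ω hω
    rw [norm_pow, norm_eq_abs]
    exact pow_le_pow_left₀ (abs_nonneg _) hω 2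
  have intR : Integrable R μ :=
    (intT2.const_mul ζ).mono'
      (((hT.const_add 1).log.sub hT).add ((hT.pow_const 2).div_const 2)).aestronglyMeasurable hR
  have hsplit : (∫ ω, log (1 + T ω) ∂μ) - (∫ ω, T ω ∂μ) + (∫ ω, T ω ^ 2 ∂μ) / 2
      = ∫ ω, R ω ∂μ := by
    rw [show (fun ω => log (1 + T ω)) = fun ω => R ω + T ω - T ω ^ 2 / 2 from
        funext fun ω => by simp only [R]; ring,
      integral_sub (f := fun ω => R ω + T ω) (intR.add intT) (intT2.div_const 2),
      integral_add intR intT, integral_div]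
    ring
  rw [hsplit, ← integral_const_mul, ← norm_eq_abs]
  exact norm_integral_le_of_norm_le (intT2.const_mul ζ) hR

theorem stmt4_general {Ω : Type*} {mΩ : MeasurableSpace Ω} (μ : Measure Ω) [IsProbabilityMeasure μ]
    (T : Ω → ℝ) (hTm : Measurable T)
    (c : ℝ) (n : ℕ)
    (ζ : ℝ)
    (hbound : ∀ᵐ ω ∂μ, |T ω| ≤ ζ)
    (hmean : ∫ ω, T ω ∂μ = 0)
    (hvar : ∫ ω, (T ω)^2 ∂μ = Real.exp (c / n) - 1)
    (h1 : Real.exp (c / n) - 1 ≤ 2 * c / n)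
    (h2 : Real.exp (c / n) - 1 - c / n ≤ 2 * c^2 / n^2)
    (h3 : 1 ≤ 3 * (1 - ζ)) :
    |(∫ ω, Real.log (1 + T ω) ∂μ) + c / (2 * n)| ≤ 2 * c * ζ / n + c^2 / n^2 := by
  have hζ : 0 ≤ ζ := by
    obtain ⟨ω, hω⟩ := hbound.exists
    exact (abs_nonneg _).trans hω
  have hlog := abs_integral_log_one_add_sub_le hTm.aemeasurable hbound h3
  rw [hmean, hvar] at hlog
  have hexp : 0 ≤ exp (c / n) - 1 - c / n := by linarith [add_one_le_exp (c / n)]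
  have hrem : ζ * (exp (c / n) - 1) ≤ 2 * c * ζ / n := by
    rw [mul_comm, mul_div_right_comm]
    exact mul_le_mul_of_nonneg_right h1 hζ
  rw [abs_le] at hlog ⊢
  rw [show c / (2 * n) = c / n / 2 by ring]
  rw [show 2 * c ^ 2 / (n : ℝ) ^ 2 = 2 * (c ^ 2 / n ^ 2) by ring] at h2
  constructor <;> linarith [hlog.1, hlog.2]

theorem stmt4 {Ω : Type*} {mΩ : MeasurableSpace Ω} (μ : Measure Ω) [IsProbabilityMeasure μ]
    (T : Ω → ℝ) (hTm : Measurable T)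
    (c : ℝ) (hc : 0 < c) (n : ℕ) (hn : 0 < n)
    (ζ : ℝ) (hζ0 : 0 < ζ) (hζ : ζ < 1/2)
    (hbound : ∀ᵐ ω ∂μ, |T ω| ≤ ζ)
    (hmean : ∫ ω, T ω ∂μ = 0)
    (hvar : ∫ ω, (T ω)^2 ∂μ = Real.exp (c / n) - 1)
    (h1 : Real.exp (c / n) - 1 ≤ 2 * c / n)
    (h2 : Real.exp (c / n) - 1 - c / n ≤ 2 * c^2 / n^2)
    (h3 : 1 ≤ 3 * (1 - ζ)) :
    |(∫ ω, Real.log (1 + T ω) ∂μ) + c / (2 * n)| ≤ 2 * c * ζ / n + c^2 / n^2 :=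
  stmt4_general (mΩ := mΩ) μ T hTm c n ζ hbound hmean hvar h1 h2 h3
end

section
/- Let T be a random variable with |T| ≤ ζ a.s. where 0 < ζ < 1, E[T] = 0, and E[T²] = exp(c/n) − 1, with n large enough that exp(c/n) − 1 ≤ 2c/n, exp(c/n) − 1 − c/n ≤ 2c²/n², and (3 − 2·log(1−ζ))/(3(1−ζ)³) ≤ 2. Then |E[log²(1 + T)] − c/n| ≤ 4cζ/n + 2c²/n². -/
open Real
set_option maxHeartbeats 1000000

lemma ptwise {ζ : ℝ} (hζ0 : 0 < ζ) (hζ : ζ < 1)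
    (h3 : (3 - 2 * Real.log (1 - ζ)) / (3 * (1 - ζ)^3) ≤ 2)
    {t : ℝ} (ht : |t| ≤ ζ) :
    |(Real.log (1 + t))^2 - t^2| ≤ 2 * ζ * t^2 := by
  have h1ζ : (0:ℝ) < 1 - ζ := by linarith
  have ht1 : |t| < 1 := lt_of_le_of_lt ht hζ
  have ht1' : |(-t)| < 1 := by rwa [abs_neg]
  have hs := Real.abs_log_sub_add_sum_range_le ht1' 2
  simp [Finset.sum_range_succ] at hs
  -- hs : |-t + t ^ 2 / (1 + 1) + log (1 + t)| ≤ |t| ^ 3 / (1 - |t|)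
  have hu0 : 0 ≤ |t| := abs_nonneg t
  have ht2 : t^2 = |t|^2 := (sq_abs t).symm
  have hA : |Real.log (1 + t) - (t - t^2/2)| ≤ ζ * t^2 / (1 - ζ) := by
    have e1 : Real.log (1 + t) - (t - t^2/2) = -t + t ^ 2 / (1 + 1) + Real.log (1 + t) := by ring
    rw [e1]
    refine hs.trans ?_
    rw [ht2]
    apply div_le_div₀ (by positivity) ?_ h1ζ (by linarith)
    calc |t|^3 = |t| * |t|^2 := by ring
    _ ≤ ζ * |t|^2 := by nlinarith
  -- derive from h3 : 3 + 2ζ ≤ 6(1-ζ)^3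
  have hlog : Real.log (1 - ζ) ≤ -ζ := by
    have := Real.log_le_sub_one_of_pos h1ζ
    linarith
  have h3' : 3 + 2*ζ ≤ 6*(1-ζ)^3 := by
    have hpos : 0 < 3*(1-ζ)^3 := by positivity
    rw [div_le_iff₀ hpos] at h3
    nlinarith
  set L := Real.log (1 + t) with hL
  have hd : |L - t| ≤ t^2/2 + ζ * t^2 / (1 - ζ) := by
    have : |L - t| ≤ |L - (t - t^2/2)| + |t^2/2| := by
      have : L - t = (L - (t - t^2/2)) + (-(t^2/2)) := by ring
      rw [this]
      exact (abs_add_le _ _).trans (by rw [abs_neg])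
    refine this.trans ?_
    have : |t^2/2| = t^2/2 := abs_of_nonneg (by positivity)
    linarith
  have hsum : |L + t| ≤ 2*|t| + t^2/2 + ζ * t^2 / (1 - ζ) := by
    have e : L + t = (L - (t - t^2/2)) + (2*t - t^2/2) := by ring
    rw [e]
    refine (abs_add_le _ _).trans ?_
    have : |2*t - t^2/2| ≤ 2*|t| + t^2/2 := by
      refine (abs_sub _ _).trans ?_
      have h1 : |2*t| = 2*|t| := by rw [abs_mul]; simp
      have h2 : |t^2/2| = t^2/2 := abs_of_nonneg (by positivity)
      linarith
    linarith
  have hfact : |L^2 - t^2| = |L - t| * |L + t| := by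
    rw [← abs_mul]; ring_nf
  rw [hfact]
  have hb1 : (0:ℝ) ≤ t^2/2 + ζ * t^2 / (1 - ζ) := by positivity
  have h3'' : (1+ζ)*(4-3*ζ+ζ^2) ≤ 8*(1-ζ)^2 := by nlinarith [mul_pos hζ0 hζ0, mul_pos (mul_pos hζ0 hζ0) hζ0, sq_nonneg ζ, mul_pos h1ζ h1ζ]
  have key : (t^2/2 + ζ * t^2 / (1 - ζ)) * (2*|t| + t^2/2 + ζ * t^2 / (1 - ζ)) ≤ 2 * ζ * t^2 := by
    rw [ht2]
    set u := |t| with hu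
    have hP : ((1-ζ)*u^2/2 + ζ*u^2) * (2*u*(1-ζ) + (1-ζ)*u^2/2 + ζ*u^2) ≤ 2*ζ*u^2*(1-ζ)^2 := by
      have hcube : u^3 ≤ ζ*u^2 := by nlinarith
      have hlin : 2-2*ζ + (1+ζ)*u/2 ≤ 2-2*ζ + (1+ζ)*ζ/2 := by nlinarith
      have hlinpos : (0:ℝ) ≤ 2-2*ζ + (1+ζ)*u/2 := by nlinarith
      have e : ((1-ζ)*u^2/2 + ζ*u^2) * (2*u*(1-ζ) + (1-ζ)*u^2/2 + ζ*u^2)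
          = (1+ζ)/2 * u^3 * (2-2*ζ + (1+ζ)*u/2) := by ring
      rw [e]
      calc (1+ζ)/2 * u^3 * (2-2*ζ + (1+ζ)*u/2)
          ≤ (1+ζ)/2 * (ζ*u^2) * (2-2*ζ + (1+ζ)*ζ/2) := by
            apply mul_le_mul (mul_le_mul le_rfl hcube (by positivity) (by positivity)) hlin hlinpos
            positivity
      _ = ζ*u^2 * ((1+ζ)*(4-3*ζ+ζ^2)) / 4 := by ring
      _ ≤ ζ*u^2 * (8*(1-ζ)^2) / 4 := by
            apply div_le_div_of_nonneg_right ?_ (by norm_num)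
            exact mul_le_mul_of_nonneg_left h3'' (by positivity)
      _ = 2*ζ*u^2*(1-ζ)^2 := by ring
    have e2 : (u^2/2 + ζ * u^2 / (1 - ζ)) * (2*u + u^2/2 + ζ * u^2 / (1 - ζ))
        = (((1-ζ)*u^2/2 + ζ*u^2) * (2*u*(1-ζ) + (1-ζ)*u^2/2 + ζ*u^2)) / (1-ζ)^2 := by
      field_simp
    rw [e2]
    rw [div_le_iff₀ (by positivity)]
    calc ((1-ζ)*u^2/2 + ζ*u^2) * (2*u*(1-ζ) + (1-ζ)*u^2/2 + ζ*u^2) ≤ 2*ζ*u^2*(1-ζ)^2 := hP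
    _ = 2 * ζ * u ^ 2 * (1-ζ)^2 := by ring
  calc |L - t| * |L + t| ≤ (t^2/2 + ζ * t^2 / (1 - ζ)) * (2*|t| + t^2/2 + ζ * t^2 / (1 - ζ)) :=
        mul_le_mul hd hsum (abs_nonneg _) hb1
  _ ≤ 2 * ζ * t^2 := key

open MeasureTheory ProbabilityTheory Real

theorem stmt5 {Ω : Type*} {mΩ : MeasurableSpace Ω} (μ : Measure Ω) [IsProbabilityMeasure μ]
    (T : Ω → ℝ) (hTm : Measurable T)
    (c : ℝ) (hc : 0 < c) (n : ℕ) (hn : 0 < n)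
    (ζ : ℝ) (hζ0 : 0 < ζ) (hζ : ζ < 1)
    (hbound : ∀ᵐ ω ∂μ, |T ω| ≤ ζ)
    (hmean : ∫ ω, T ω ∂μ = 0)
    (hvar : ∫ ω, (T ω)^2 ∂μ = Real.exp (c / n) - 1)
    (h1 : Real.exp (c / n) - 1 ≤ 2 * c / n)
    (h2 : Real.exp (c / n) - 1 - c / n ≤ 2 * c^2 / n^2)
    (h3 : (3 - 2 * Real.log (1 - ζ)) / (3 * (1 - ζ)^3) ≤ 2) :
    |(∫ ω, (Real.log (1 + T ω))^2 ∂μ) - c / n| ≤ 4 * c * ζ / n + 2 * c^2 / n^2 := by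
  have hn' : (0:ℝ) < n := by exact_mod_cast hn
  have h1ζ : (0:ℝ) < 1 - ζ := by linarith
  set f : Ω → ℝ := fun ω => (T ω)^2 with hf
  set g : Ω → ℝ := fun ω => (Real.log (1 + T ω))^2 with hg
  have hfm : Measurable f := hTm.pow_const 2
  have hgm : Measurable g := ((measurable_const.add hTm).log).pow_const 2
  have hptw : ∀ᵐ ω ∂μ, |g ω - f ω| ≤ 2 * ζ * f ω :=
    hbound.mono fun ω h => ptwise hζ0 hζ h3 h
  have hfb : ∀ᵐ ω ∂μ, ‖f ω‖ ≤ (1:ℝ) := hbound.mono fun ω h => by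
    simp only [hf, Real.norm_eq_abs, abs_pow]
    calc |T ω|^2 ≤ ζ^2 := by nlinarith [abs_nonneg (T ω)]
    _ ≤ 1 := by nlinarith
  have hfint : Integrable f μ :=
    (integrable_const (1:ℝ)).mono' hfm.aestronglyMeasurable hfb
  have hgb : ∀ᵐ ω ∂μ, ‖g ω‖ ≤ (3:ℝ) := by
    filter_upwards [hbound, hptw] with ω h hp
    have hfω : f ω ≤ 1 := by
      simp only [hf]; rw [← sq_abs]; nlinarith [abs_nonneg (T ω)]
    have hf0 : 0 ≤ f ω := sq_nonneg _
    have : g ω ≤ f ω + 2 * ζ * f ω := by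
      have := abs_le.mp hp
      linarith [this.2]
    have hg0 : 0 ≤ g ω := sq_nonneg _
    rw [Real.norm_eq_abs, abs_of_nonneg hg0]
    nlinarith
  have hgint : Integrable g μ :=
    (integrable_const (3:ℝ)).mono' hgm.aestronglyMeasurable hgb
  have hIdiff : |(∫ ω, g ω ∂μ) - ∫ ω, f ω ∂μ| ≤ 2 * ζ * ∫ ω, f ω ∂μ := by
    rw [← integral_sub hgint hfint]
    calc |∫ ω, (g ω - f ω) ∂μ| ≤ ∫ ω, |g ω - f ω| ∂μ := by
          simpa [Real.norm_eq_abs] using norm_integral_le_integral_norm (μ := μ) (fun ω => g ω - f ω)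
    _ ≤ ∫ ω, 2 * ζ * f ω ∂μ :=
        integral_mono_ae (hgint.sub hfint).abs (hfint.const_mul _) hptw
    _ = 2 * ζ * ∫ ω, f ω ∂μ := integral_const_mul _ _
  have hfval : ∫ ω, f ω ∂μ = Real.exp (c / n) - 1 := hvar
  have hlow : c / n ≤ Real.exp (c / n) - 1 := by
    have := Real.add_one_le_exp (c / n); linarith
  rw [hfval] at hIdiff
  have habs := abs_le.mp hIdiff
  have hE1 : 2 * ζ * (Real.exp (c / n) - 1) ≤ 2 * ζ * (2 * c / n) :=
    mul_le_mul_of_nonneg_left h1 (by linarith)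
  have hc2 : (0:ℝ) ≤ 2 * c^2 / n^2 := by positivity
  have hEq : integral μ g = ∫ ω, g ω ∂μ := rfl
  rw [abs_le]
  have hring : 2 * ζ * (2 * c / ↑n) = 4 * c * ζ / ↑n := by ring
  constructor <;> linarith [habs.1, habs.2, hEq, hE1, hlow, hc2, h2, hring]
end

section
/- Let Z ~ N(0,1) and let c > 0, n ∈ ℕ, ζ_n > 0 satisfy: log(1+ζ_n) ≥ ζ_n/2, √(n/c)·ζ_n ≥ √(c/n), √n·ζ_n/(2√c) ≥ √(2/π), and n·ζ_n²/log n ≥ 16c. Then P(|exp(√(c/n)·Z − c/(2n)) − 1| > ζ_n) ≤ 1/n². -/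
open MeasureTheory ProbabilityTheory Real

/-!
Put `a = √(c/n)` and `t = ζ / (2a)`. Since `log (1 + ζ) ≥ ζ/2`, `log (1 - ζ) ≤ -ζ` and the drift
`c/(2n)` is at most `ζ/2`, the deviation `|exp (aZ - c/(2n)) - 1| > ζ` forces `|Z| > t`. The Mills
ratio bound gives `P(|Z| > t) ≤ 2 exp (-t²/2) / (√(2π) t)`, where `√(2π) t ≥ 2` and
`t² = nζ²/(4c) ≥ 4 log n`, so the probability is at most `n⁻²`.
-/

open Filter Set Topology

lemma hasDerivAt_neg_exp_neg_sq_div_two (x : ℝ) :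
    HasDerivAt (fun y : ℝ => -exp (-y ^ 2 / 2)) (x * exp (-x ^ 2 / 2)) x := by
  have h : HasDerivAt (fun y : ℝ => -y ^ 2 / 2) (-x) x := by
    refine (((hasDerivAt_pow 2 x).neg).div_const 2).congr_deriv ?_
    push_cast
    ring
  exact h.exp.neg.congr_deriv (by ring)

lemma tendsto_neg_exp_neg_sq_div_two_atTop :
    Tendsto (fun y : ℝ => -exp (-y ^ 2 / 2)) atTop (𝓝 0) := by
  have h : Tendsto (fun y : ℝ => -y ^ 2 / 2) atTop atBot :=
    (tendsto_neg_atBot_iff.mpr (tendsto_pow_atTop two_ne_zero)).atBot_div_const two_pos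
  simpa using (tendsto_exp_atBot.comp h).neg

lemma integrableOn_Ioi_mul_exp_neg_sq_div_two {t : ℝ} (ht : 0 ≤ t) :
    IntegrableOn (fun x : ℝ => x * exp (-x ^ 2 / 2)) (Ioi t) :=
  integrableOn_Ioi_deriv_of_nonneg' (fun x _ => hasDerivAt_neg_exp_neg_sq_div_two x)
    (fun _ hx => mul_nonneg (ht.trans hx.le) (exp_pos _).le)
    tendsto_neg_exp_neg_sq_div_two_atTop

lemma integral_Ioi_mul_exp_neg_sq_div_two {t : ℝ} (ht : 0 ≤ t) :
    ∫ x in Ioi t, x * exp (-x ^ 2 / 2) = exp (-t ^ 2 / 2) := by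
  rw [integral_Ioi_of_hasDerivAt_of_nonneg' (fun x _ => hasDerivAt_neg_exp_neg_sq_div_two x)
    (fun _ hx => mul_nonneg (ht.trans hx.le) (exp_pos _).le)
    tendsto_neg_exp_neg_sq_div_two_atTop]
  simp

/-- Mills' ratio bound, from `1 ≤ x / t` on `Ioi t`. -/
lemma gaussianReal_Ioi_le {t : ℝ} (ht : 0 < t) :
    gaussianReal 0 1 (Ioi t) ≤ ENNReal.ofReal (exp (-t ^ 2 / 2) / (√(2 * π) * t)) := by
  rw [gaussianReal_apply_eq_integral 0 one_ne_zero]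
  refine ENNReal.ofReal_le_ofReal ?_
  calc ∫ x in Ioi t, gaussianPDFReal 0 1 x
      ≤ ∫ x in Ioi t, (√(2 * π) * t)⁻¹ * (x * exp (-x ^ 2 / 2)) := by
        refine setIntegral_mono_on (integrable_gaussianPDFReal 0 1).integrableOn
          ((integrableOn_Ioi_mul_exp_neg_sq_div_two ht.le).const_mul _) measurableSet_Ioi
          fun x hx => ?_
        have hx1 : 1 ≤ x / t := (one_le_div ht).mpr hx.le
        calc gaussianPDFReal 0 1 x = (√(2 * π))⁻¹ * (1 * exp (-x ^ 2 / 2)) := by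
              simp [gaussianPDFReal]
          _ ≤ (√(2 * π))⁻¹ * (x / t * exp (-x ^ 2 / 2)) := by gcongr
          _ = (√(2 * π) * t)⁻¹ * (x * exp (-x ^ 2 / 2)) := by ring
    _ = exp (-t ^ 2 / 2) / (√(2 * π) * t) := by
        rw [integral_const_mul, integral_Ioi_mul_exp_neg_sq_div_two ht.le, inv_mul_eq_div]

lemma gaussianReal_Iio_neg (v : NNReal) (t : ℝ) :
    gaussianReal 0 v (Iio (-t)) = gaussianReal 0 v (Ioi t) := by
  conv_rhs => rw [← neg_zero, ← gaussianReal_map_neg,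
    Measure.map_apply measurable_neg measurableSet_Ioi]
  simp

lemma gaussianReal_lt_abs_le {t : ℝ} (ht : 0 < t) :
    gaussianReal 0 1 {x | t < |x|}
      ≤ ENNReal.ofReal (2 * exp (-t ^ 2 / 2) / (√(2 * π) * t)) := by
  have hset : {x : ℝ | t < |x|} = Ioi t ∪ Iio (-t) := by
    ext x
    simp [lt_abs, lt_neg]
  have hA : 0 ≤ exp (-t ^ 2 / 2) / (√(2 * π) * t) := by positivity
  calc gaussianReal 0 1 {x | t < |x|}
      ≤ gaussianReal 0 1 (Ioi t) + gaussianReal 0 1 (Iio (-t)) :=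
        hset ▸ measure_union_le _ _
    _ ≤ ENNReal.ofReal (exp (-t ^ 2 / 2) / (√(2 * π) * t))
          + ENNReal.ofReal (exp (-t ^ 2 / 2) / (√(2 * π) * t)) := by
        rw [gaussianReal_Iio_neg]
        exact add_le_add (gaussianReal_Ioi_le ht) (gaussianReal_Ioi_le ht)
    _ = ENNReal.ofReal (2 * exp (-t ^ 2 / 2) / (√(2 * π) * t)) := by
        rw [← ENNReal.ofReal_add hA hA]
        ring_nf

lemma half_lt_abs_of_lt_abs_exp_sub_one {a b ζ : ℝ} (hζ : 0 < ζ) (hb₀ : 0 ≤ b) (hb : b ≤ ζ / 2)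
    (hlog : ζ / 2 ≤ log (1 + ζ)) (h : ζ < |exp (a - b) - 1|) : ζ / 2 < |a| := by
  rcases lt_abs.mp h with hup | hdown
  · have : log (1 + ζ) < a - b := by
      rw [← log_exp (a - b)]
      exact log_lt_log (by linarith) (by linarith)
    exact lt_abs.mpr (Or.inl (by linarith))
  · have hlt : exp (a - b) < 1 - ζ := by linarith
    have hpos : 0 < 1 - ζ := (exp_pos _).trans hlt
    have : a - b < log (1 - ζ) := by
      rw [← log_exp (a - b)]
      exact log_lt_log (exp_pos _) hlt
    have hlog' : log (1 - ζ) ≤ -ζ := by linarith [log_le_sub_one_of_pos hpos]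
    exact lt_abs.mpr (Or.inr (by linarith))

lemma two_le_sqrt_two_pi_mul {t : ℝ} (h : √(2 / π) ≤ t) : 2 ≤ √(2 * π) * t :=
  calc (2 : ℝ) = √(2 * π) * √(2 / π) := by
        rw [← sqrt_mul (by positivity), show 2 * π * (2 / π) = 2 ^ 2 by field_simp,
          sqrt_sq zero_le_two]
    _ ≤ √(2 * π) * t := by gcongr

lemma exp_neg_sq_div_two_le_one_div_sq {t x : ℝ} (hx : 0 < x) (h : 4 * log x ≤ t ^ 2) :
    exp (-t ^ 2 / 2) ≤ 1 / x ^ 2 :=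
  calc exp (-t ^ 2 / 2) ≤ exp (-(2 * log x)) := exp_le_exp.mpr (by linarith)
    _ = 1 / x ^ 2 := by
        rw [exp_neg, show (2 : ℝ) * log x = log (x ^ 2) by rw [log_pow]; push_cast; ring,
          exp_log (by positivity), one_div]

/-- `log n = 0` for `n ≤ 1`, so the hypothesis cannot hold there. -/
lemma two_le_of_le_div_log {k y : ℝ} {n : ℕ} (hk : 0 < k) (h : k ≤ y / log n) : 2 ≤ n := by
  by_contra! hlt
  have : log n = 0 := by
    interval_cases n <;> simp
  rw [this, div_zero] at h
  linarith

lemma div_le_of_sqrt_div_le_sqrt_div_mul {x y ζ : ℝ} (hx : 0 < x) (hy : 0 < y)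
    (h : √(x / y) ≤ √(y / x) * ζ) : x / y ≤ ζ := by
  have hinv : √(x / y) * √(y / x) = 1 := by
    rw [← sqrt_mul (by positivity), div_mul_div_cancel₀ hy.ne', div_self hx.ne', sqrt_one]
  have : √(x / y) * √(x / y) ≤ √(x / y) * (√(y / x) * ζ) := by gcongr
  rwa [mul_self_sqrt (by positivity), ← mul_assoc, hinv, one_mul] at this

lemma four_mul_log_le_sq {c x ζ : ℝ} (hc : 0 < c) (hx : 1 < x)
    (h : 16 * c ≤ x * ζ ^ 2 / log x) : 4 * log x ≤ (√x * ζ / (2 * √c)) ^ 2 := by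
  rw [div_pow, mul_pow, mul_pow, sq_sqrt (by linarith), sq_sqrt hc.le,
    le_div_iff₀ (by positivity)]
  linarith [(le_div_iff₀ (log_pos hx)).mp h]

theorem stmt7_general {Ω : Type*} {mΩ : MeasurableSpace Ω} (μ : Measure Ω) [IsProbabilityMeasure μ]
    (Z : Ω → ℝ) (hZ : Measure.map Z μ = gaussianReal 0 1)
    (c : ℝ) (hc : 0 < c) (n : ℕ) (ζ : ℝ)
    (h1 : ζ / 2 ≤ Real.log (1 + ζ))
    (h2 : Real.sqrt (c / n) ≤ Real.sqrt (n / c) * ζ)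
    (h3 : Real.sqrt (2 / Real.pi) ≤ Real.sqrt n * ζ / (2 * Real.sqrt c))
    (h4 : 16 * c ≤ n * ζ^2 / Real.log n) :
    μ {ω | ζ < |Real.exp (Real.sqrt (c / n) * Z ω - c / (2 * n)) - 1|}
      ≤ ENNReal.ofReal (1 / n^2) := by
  have hn2 : (2 : ℝ) ≤ n := by exact_mod_cast two_le_of_le_div_log (by positivity) h4
  have hn : (0 : ℝ) < n := by linarith
  have ha : 0 < √(c / n) := sqrt_pos.mpr (by positivity)
  have ht : 0 < √n * ζ / (2 * √c) := (sqrt_pos.mpr (by positivity)).trans_le h3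
  have hat : √(c / n) * (√n * ζ / (2 * √c)) = ζ / 2 := by
    have := sqrt_pos.mpr hc
    rw [sqrt_div hc.le]
    field_simp
  have hdrift : c / (2 * n) ≤ ζ / 2 := by
    linarith [div_le_of_sqrt_div_le_sqrt_div_mul hc hn h2, show c / (2 * n) = c / n / 2 by ring]
  have hevent : ∀ ω, ζ < |exp (√(c / n) * Z ω - c / (2 * n)) - 1| →
      √n * ζ / (2 * √c) < |Z ω| := fun ω hω => by
    have := half_lt_abs_of_lt_abs_exp_sub_one (by linarith [mul_pos ha ht]) (by positivity)
      hdrift h1 hω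
    rw [abs_mul, abs_of_pos ha, ← hat] at this
    exact lt_of_mul_lt_mul_left this ha.le
  have hZm : AEMeasurable Z μ := aemeasurable_of_map_neZero (by rw [hZ]; infer_instance)
  calc μ {ω | ζ < |exp (√(c / n) * Z ω - c / (2 * n)) - 1|}
      ≤ μ (Z ⁻¹' {x | √n * ζ / (2 * √c) < |x|}) := measure_mono hevent
    _ ≤ gaussianReal 0 1 {x | √n * ζ / (2 * √c) < |x|} := hZ ▸ Measure.le_map_apply hZm _
    _ ≤ _ := gaussianReal_lt_abs_le ht
    _ ≤ ENNReal.ofReal (1 / n ^ 2) := by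
        refine ENNReal.ofReal_le_ofReal ((div_le_iff₀ (by positivity)).mpr ?_)
        nlinarith [two_le_sqrt_two_pi_mul h3, exp_pos (-(√n * ζ / (2 * √c)) ^ 2 / 2),
          exp_neg_sq_div_two_le_one_div_sq hn (four_mul_log_le_sq hc (by linarith) h4)]

theorem stmt7 {Ω : Type*} {mΩ : MeasurableSpace Ω} (μ : Measure Ω) [IsProbabilityMeasure μ]
    (Z : Ω → ℝ) (hZ : Measure.map Z μ = gaussianReal 0 1)
    (c : ℝ) (hc : 0 < c) (n : ℕ) (hn : 0 < n) (ζ : ℝ) (hζ : 0 < ζ)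
    (h1 : ζ / 2 ≤ Real.log (1 + ζ))
    (h2 : Real.sqrt (c / n) ≤ Real.sqrt (n / c) * ζ)
    (h3 : Real.sqrt (2 / Real.pi) ≤ Real.sqrt n * ζ / (2 * Real.sqrt c))
    (h4 : 16 * c ≤ n * ζ^2 / Real.log n) :
    μ {ω | ζ < |Real.exp (Real.sqrt (c / n) * Z ω - c / (2 * n)) - 1|}
      ≤ ENNReal.ofReal (1 / n^2) :=
  stmt7_general (mΩ := mΩ) μ Z hZ c hc n ζ h1 h2 h3 h4
end

section
/- Let G be geometric Brownian motion G(t) = exp(√c·B(t) − ct/2), and for n ∈ ℕ consider the event A_n that max_{0 ≤ m ≤ n−1} |G((m+1)/n)/G(m/n) − 1| ≤ ζ_n. If (ζ_n) satisfies ζ_n → 0 and liminf n·ζ_n²/log n > 16c, then for all sufficiently large n, P(A_n) ≥ (1 − 1/n²)^n, and hence P(A_n) → 1 as n → ∞. -/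
open MeasureTheory ProbabilityTheory Real Filter
open scoped NNReal ENNReal Topology

/-! The increments `ΔB_m = B((m+1)/n) - B(m/n)`, `m < n`, are independent `N(0, 1/n)`, and
`G((m+1)/n) / G(m/n) = exp(√c ΔB_m - c/(2n))`. Since `|e^y - 1| ≤ |y| + y²`, this ratio is within
`ζ_n ≤ 1/2` of `1` as soon as `|ΔB_m| ≤ ζ_n/(2√c)` and `c/n ≤ ζ_n/3`. The two-sided Chernoff bound
gives `P(|ΔB_m| > ζ_n/(2√c)) ≤ 2 exp(-n ζ_n²/(8c))`, which is at most `1/n²` for large `n`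
because the liminf exceeds `16c` strictly (the slack absorbs the factor `2`); independence gives `P(A_n) ≥ (1 - 1/n²)^n ≥ 1 - 1/n` (Bernoulli). -/

section

variable {Ω : Type*} {mΩ : MeasurableSpace Ω} {μ : Measure Ω}

lemma hasSubgaussianMGF_of_map_eq_gaussianReal {X : Ω → ℝ} (hX : AEMeasurable X μ) {v : ℝ≥0}
    (h : μ.map X = gaussianReal 0 v) : HasSubgaussianMGF X v μ := by
  rw [← HasSubgaussianMGF.id_map_iff hX, h]
  exact ⟨integrable_exp_mul_gaussianReal, fun t => by simp [mgf_id_gaussianReal]⟩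

namespace ProbabilityTheory.HasSubgaussianMGF

variable {X : Ω → ℝ} {c : ℝ≥0} {ε : ℝ}

lemma measureReal_abs_gt_le [IsFiniteMeasure μ] (h : HasSubgaussianMGF X c μ) (hε : 0 ≤ ε) :
    μ.real {ω | ε < |X ω|} ≤ 2 * exp (-ε ^ 2 / (2 * c)) := by
  have hsub : {ω | ε < |X ω|} ⊆ {ω | ε ≤ X ω} ∪ {ω | ε ≤ (-X) ω} := fun ω (hω : ε < |X ω|) =>
    (lt_abs.mp hω).imp le_of_lt le_of_lt
  calc μ.real {ω | ε < |X ω|}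
      ≤ μ.real {ω | ε ≤ X ω} + μ.real {ω | ε ≤ (-X) ω} :=
        (measureReal_mono hsub).trans (measureReal_union_le _ _)
    _ ≤ exp (-ε ^ 2 / (2 * c)) + exp (-ε ^ 2 / (2 * c)) :=
        add_le_add (h.measure_ge_le hε) (h.neg.measure_ge_le hε)
    _ = 2 * exp (-ε ^ 2 / (2 * c)) := (two_mul _).symm

lemma one_sub_le_measureReal_abs_le [IsProbabilityMeasure μ] (h : HasSubgaussianMGF X c μ)
    (hε : 0 ≤ ε) : 1 - 2 * exp (-ε ^ 2 / (2 * c)) ≤ μ.real {ω | |X ω| ≤ ε} := by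
  have hcover : Set.univ ⊆ {ω | |X ω| ≤ ε} ∪ {ω | ε < |X ω|} := fun ω _ => le_or_gt |X ω| ε
  have := (measureReal_mono (μ := μ) hcover).trans (measureReal_union_le _ _)
  rw [probReal_univ] at this
  linarith [h.measureReal_abs_gt_le hε]

end ProbabilityTheory.HasSubgaussianMGF

namespace ProbabilityTheory.iIndepFun

variable {ι : Type*} [Fintype ι]

lemma pow_card_le_measure_iInter_preimage {β : Type*} [MeasurableSpace β]
    {X : ι → Ω → β} (h : iIndepFun X μ) {S : Set β} (hS : MeasurableSet S) {p : ℝ≥0∞}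
    (hp : ∀ i, p ≤ μ (X i ⁻¹' S)) : p ^ Fintype.card ι ≤ μ (⋂ i, X i ⁻¹' S) := by
  have := h.measure_inter_preimage_eq_mul Finset.univ (sets := fun _ => S) fun _ _ => hS
  simp only [Finset.mem_univ, Set.iInter_true] at this
  rw [this]
  exact Finset.pow_card_le_prod _ _ _ fun i _ => hp i

lemma ofReal_pow_le_measure_forall_abs_le [IsProbabilityMeasure μ] {X : ι → Ω → ℝ}
    (hindep : iIndepFun X μ) (hX : ∀ i, Measurable (X i)) {v : ℝ≥0}
    (hlaw : ∀ i, μ.map (X i) = gaussianReal 0 v) {a : ℝ} (ha : 0 ≤ a) :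
    ENNReal.ofReal (1 - 2 * exp (-a ^ 2 / (2 * v))) ^ Fintype.card ι
      ≤ μ {ω | ∀ i, |X i ω| ≤ a} := by
  have hS : MeasurableSet {x : ℝ | |x| ≤ a} := measurableSet_le measurable_abs measurable_const
  convert hindep.pow_card_le_measure_iInter_preimage hS fun i => ?_ using 2
  · ext ω; simp
  have hXi := hasSubgaussianMGF_of_map_eq_gaussianReal (hX i).aemeasurable (hlaw i)
  rw [← ofReal_measureReal]
  exact ENNReal.ofReal_le_ofReal (hXi.one_sub_le_measureReal_abs_le ha)

end ProbabilityTheory.iIndepFun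

end

lemma abs_exp_sub_one_le_of_abs_le {y z : ℝ} (hz : z ≤ 1 / 2) (hy : |y| ≤ 2 * z / 3) :
    |exp y - 1| ≤ z := by
  have hy1 : |y| ≤ 1 := by linarith
  have hquad := abs_exp_sub_one_sub_id_le hy1
  have htri : |exp y - 1| ≤ |exp y - 1 - y| + |y| := by
    simpa using abs_sub_le (exp y - 1) y 0
  nlinarith [sq_abs y, abs_nonneg y]

lemma abs_exp_div_exp_sub_one_le {c z s t x y : ℝ} (hc : 0 < c) (hz : z ≤ 1 / 2) (hst : s ≤ t)
    (hdrift : 3 * c * (t - s) ≤ z) (hxy : |y - x| ≤ z / (2 * √c)) :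
    |exp (√c * y - c * t / 2) / exp (√c * x - c * s / 2) - 1| ≤ z := by
  rw [← exp_sub]
  apply abs_exp_sub_one_le_of_abs_le hz
  have hsc : 0 < √c := sqrt_pos.mpr hc
  have hdiff : |√c * (y - x)| ≤ z / 2 := by
    rw [abs_mul, abs_of_pos hsc]
    calc √c * |y - x| ≤ √c * (z / (2 * √c)) := by gcongr
      _ = z / 2 := by field_simp
  have hdrift' : |c * (t - s) / 2| ≤ z / 6 := by
    rw [abs_of_nonneg (by nlinarith)]; linarith
  calc |√c * y - c * t / 2 - (√c * x - c * s / 2)|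
      = |√c * (y - x) - c * (t - s) / 2| := by ring_nf
    _ ≤ |√c * (y - x)| + |c * (t - s) / 2| := abs_sub _ _
    _ ≤ 2 * z / 3 := by linarith

lemma two_mul_exp_neg_le_inv_sq {x s : ℝ} (hx : 0 < x) (h : log 2 + 2 * log x ≤ s) :
    2 * exp (-s) ≤ (x ^ 2)⁻¹ := by
  calc 2 * exp (-s) ≤ 2 * exp (-(log 2 + 2 * log x)) := by gcongr
    _ = (x ^ 2)⁻¹ := by
      rw [exp_neg, exp_add, two_mul (log x), exp_add, exp_log two_pos, exp_log hx]
      field_simp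

lemma eventually_log_two_add_two_mul_log_le {c : ℝ} (hc : 0 < c) {ζ : ℕ → ℝ}
    (h : 16 * c < atTop.liminf (fun n : ℕ => n * ζ n ^ 2 / log n)) :
    ∀ᶠ n : ℕ in atTop, log 2 + 2 * log n ≤ n * ζ n ^ 2 / (8 * c) := by
  obtain ⟨L, hL, hLlim⟩ := exists_between h
  have hbdd : IsBoundedUnder (· ≥ ·) atTop (fun n : ℕ => n * ζ n ^ 2 / log n) :=
    isBoundedUnder_of ⟨0, fun n => div_nonneg (by positivity) (log_natCast_nonneg n)⟩
  have hε : 0 < L / (8 * c) - 2 := by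
    rw [sub_pos, lt_div_iff₀ (by positivity)]; linarith
  have hlog : Tendsto (fun n : ℕ => (L / (8 * c) - 2) * log n) atTop atTop :=
    (tendsto_log_atTop.comp tendsto_natCast_atTop_atTop).const_mul_atTop hε
  filter_upwards [eventually_lt_of_lt_liminf hLlim hbdd, hlog.eventually_ge_atTop (log 2),
    eventually_gt_atTop 1] with n hn hn2 hn1
  have hlogn : 0 < log n := log_pos (by exact_mod_cast hn1)
  rw [lt_div_iff₀ hlogn] at hn
  have hn2' := mul_le_mul_of_nonneg_right hn2 (by positivity : (0 : ℝ) ≤ 8 * c)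
  rw [show (L / (8 * c) - 2) * log n * (8 * c) = (L - 16 * c) * log n by field_simp; ring] at hn2'
  rw [le_div_iff₀ (by positivity)]
  linarith

lemma tendsto_one_sub_inv_sq_pow :
    Tendsto (fun n : ℕ => (1 - 1 / (n : ℝ) ^ 2) ^ n) atTop (𝓝 1) := by
  have hlower : Tendsto (fun n : ℕ => 1 - 1 / (n : ℝ)) atTop (𝓝 1) := by
    simpa using tendsto_const_nhds.sub (tendsto_one_div_atTop_nhds_zero_nat (𝕜 := ℝ))
  have hsmall : ∀ᶠ n : ℕ in atTop, (n : ℝ) ≠ 0 ∧ 0 ≤ 1 / (n : ℝ) ^ 2 ∧ 1 / (n : ℝ) ^ 2 ≤ 1 := by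
    filter_upwards [eventually_ge_atTop 1] with n hn
    have hn' : (1 : ℝ) ≤ n := by exact_mod_cast hn
    exact ⟨by positivity, by positivity, by rw [div_le_one (by positivity)]; exact one_le_pow₀ hn'⟩
  refine tendsto_of_tendsto_of_tendsto_of_le_of_le' hlower tendsto_const_nhds ?_ ?_
  · filter_upwards [hsmall] with n ⟨hn, _, hle⟩
    convert one_add_mul_le_pow (by linarith : (-2 : ℝ) ≤ -(1 / (n : ℝ) ^ 2)) n using 1
    · field_simp; ring
    · ring
  · filter_upwards [hsmall] with n ⟨_, hnonneg, hle⟩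
    exact pow_le_one₀ (by linarith) (by linarith)

lemma ofReal_one_sub_inv_sq_pow_le {n : ℕ} (hn : 0 < n) {q : ℝ} (hq : q ≤ 1 / (n : ℝ) ^ 2) :
    ENNReal.ofReal ((1 - 1 / (n : ℝ) ^ 2) ^ n) ≤ ENNReal.ofReal (1 - q) ^ n := by
  rw [ENNReal.ofReal_pow (sub_nonneg.mpr (div_le_one_of_le₀
    (one_le_pow₀ (by exact_mod_cast hn)) (by positivity)))]
  gcongr

lemma ofReal_pow_le_measure_forall_abs_increment_le {Ω : Type*} {mΩ : MeasurableSpace Ω}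
    {μ : Measure Ω} [IsProbabilityMeasure μ] {B : ℝ → Ω → ℝ} (hmeas : ∀ t, Measurable (B t))
    (hincr_law : ∀ s t : ℝ, 0 ≤ s → s ≤ t →
      μ.map (fun ω => B t ω - B s ω) = gaussianReal 0 (t - s).toNNReal)
    (hincr_indep : ∀ (k : ℕ) (t : ℕ → ℝ), StrictMono t →
      iIndepFun (fun i : Fin k => fun ω => B (t (i + 1)) ω - B (t i) ω) μ)
    {n : ℕ} (hn : 0 < n) {a : ℝ} (ha : 0 ≤ a) :
    ENNReal.ofReal (1 - 2 * exp (-(n * a ^ 2 / 2))) ^ n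
      ≤ μ {ω | ∀ m : ℕ, m < n → |B ((m + 1) / n) ω - B (m / n) ω| ≤ a} := by
  have hn' : (0 : ℝ) < n := by exact_mod_cast hn
  have hgrid : StrictMono (fun k : ℕ => (k : ℝ) / n) := fun i j hij => by
    simp only; gcongr
  have hmesh : ((1 / (n : ℝ)).toNNReal : ℝ) = 1 / n := Real.coe_toNNReal _ (by positivity)
  have hincr := (hincr_indep n _ hgrid).ofReal_pow_le_measure_forall_abs_le
    (fun i => (hmeas _).sub (hmeas _)) (v := (1 / (n : ℝ)).toNNReal) (fun i => ?law) ha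
  case law =>
    rw [hincr_law _ _ (by positivity) (hgrid (Nat.lt_add_one (i : ℕ))).le]
    congr; push_cast; field_simp; ring
  rw [Fintype.card_fin, hmesh] at hincr
  convert hincr using 3
  · field_simp
  · ext ω
    simp [Fin.forall_iff]

lemma three_mul_div_le_of_log_two_add_two_mul_log_le {c z : ℝ} (hc : 0 < c) {n : ℕ} (hn : 0 < n)
    (hz0 : 0 ≤ z) (hz : z ≤ 1 / 2) (hlog : log 2 + 2 * log n ≤ n * z ^ 2 / (8 * c)) :
    3 * c / n ≤ z := by
  have hlog2 := log_two_gt_d9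
  have hlogn : 0 ≤ log n := log_natCast_nonneg n
  rw [le_div_iff₀ (by positivity)] at hlog
  rw [div_le_iff₀ (by exact_mod_cast hn)]
  nlinarith

theorem stmt9_general {Ω : Type*} {mΩ : MeasurableSpace Ω} (μ : Measure Ω) [IsProbabilityMeasure μ]
    (B : ℝ → Ω → ℝ) (c : ℝ) (hc : 0 < c)
    (hmeas : ∀ t, Measurable (B t))
    (hincr_law : ∀ s t : ℝ, 0 ≤ s → s ≤ t →
      Measure.map (fun ω => B t ω - B s ω) μ = gaussianReal 0 (Real.toNNReal (t - s)))
    (hincr_indep : ∀ (k : ℕ) (t : ℕ → ℝ), StrictMono t →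
      iIndepFun
        (fun i : Fin k => fun ω => B (t (i + 1)) ω - B (t i) ω) μ)
    (G : ℝ → Ω → ℝ) (hG : ∀ t ω, G t ω = Real.exp (Real.sqrt c * B t ω - c * t / 2))
    (ζ : ℕ → ℝ) (hζpos : ∀ n, 0 < ζ n)
    (hζ0 : Tendsto ζ atTop (nhds 0))
    (hliminf : 16 * c < Filter.atTop.liminf (fun n : ℕ => n * (ζ n)^2 / Real.log n))
    (A : ℕ → Set Ω)
    (hA : ∀ n : ℕ, A n = {ω | ∀ m : ℕ, m < n →
      |G (((m : ℝ) + 1) / n) ω / G ((m : ℝ) / n) ω - 1| ≤ ζ n}) :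
    (∀ᶠ n : ℕ in atTop, ENNReal.ofReal ((1 - 1 / (n : ℝ)^2)^n) ≤ μ (A n)) ∧
      Tendsto (fun n => μ (A n)) atTop (nhds 1) := by
  have hbound : ∀ᶠ n : ℕ in atTop, ENNReal.ofReal ((1 - 1 / (n : ℝ)^2)^n) ≤ μ (A n) := by
    filter_upwards [eventually_gt_atTop 0, eventually_log_two_add_two_mul_log_le hc hliminf,
      hζ0.eventually (eventually_le_nhds one_half_pos)] with n hn hlog hζ
    set a := ζ n / (2 * √c)
    have htail : 2 * exp (-(n * a ^ 2 / 2)) ≤ 1 / (n : ℝ) ^ 2 := by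
      rw [one_div, div_pow, mul_pow, sq_sqrt hc.le,
        show n * (ζ n ^ 2 / (2 ^ 2 * c)) / 2 = n * ζ n ^ 2 / (8 * c) by ring]
      exact two_mul_exp_neg_le_inv_sq (by exact_mod_cast hn) hlog
    have hdrift := three_mul_div_le_of_log_two_add_two_mul_log_le hc hn (hζpos n).le hζ hlog
    calc ENNReal.ofReal ((1 - 1 / (n : ℝ) ^ 2) ^ n)
        ≤ ENNReal.ofReal (1 - 2 * exp (-(n * a ^ 2 / 2))) ^ n :=
          ofReal_one_sub_inv_sq_pow_le hn htail
      _ ≤ μ {ω | ∀ m : ℕ, m < n → |B ((m + 1) / n) ω - B (m / n) ω| ≤ a} :=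
          ofReal_pow_le_measure_forall_abs_increment_le hmeas hincr_law hincr_indep hn
            (div_nonneg (hζpos n).le (by positivity))
      _ ≤ μ (A n) := by
          rw [hA]
          refine measure_mono fun ω hω m hm => ?_
          rw [hG, hG]
          refine abs_exp_div_exp_sub_one_le hc hζ (by gcongr; linarith) ?_ (hω m hm)
          convert hdrift using 2
          field_simp
          ring
  exact ⟨hbound, tendsto_of_tendsto_of_tendsto_of_le_of_le'
    (by simpa using ENNReal.tendsto_ofReal tendsto_one_sub_inv_sq_pow) tendsto_const_nhds hbound
    (Eventually.of_forall fun _ => prob_le_one)⟩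

theorem stmt9 {Ω : Type*} {mΩ : MeasurableSpace Ω} (μ : Measure Ω) [IsProbabilityMeasure μ]
    (B : ℝ → Ω → ℝ) (c : ℝ) (hc : 0 < c)
    (hmeas : ∀ t, Measurable (B t)) (hB0 : ∀ ω, B 0 ω = 0)
    (hincr_law : ∀ s t : ℝ, 0 ≤ s → s ≤ t →
      Measure.map (fun ω => B t ω - B s ω) μ = gaussianReal 0 (Real.toNNReal (t - s)))
    (hincr_indep : ∀ (k : ℕ) (t : ℕ → ℝ), StrictMono t →
      iIndepFun
        (fun i : Fin k => fun ω => B (t (i + 1)) ω - B (t i) ω) μ)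
    (G : ℝ → Ω → ℝ) (hG : ∀ t ω, G t ω = Real.exp (Real.sqrt c * B t ω - c * t / 2))
    (ζ : ℕ → ℝ) (hζpos : ∀ n, 0 < ζ n)
    (hζ0 : Tendsto ζ atTop (nhds 0))
    (hliminf : 16 * c < Filter.atTop.liminf (fun n : ℕ => n * (ζ n)^2 / Real.log n))
    (A : ℕ → Set Ω)
    (hA : ∀ n : ℕ, A n = {ω | ∀ m : ℕ, m < n →
      |G (((m : ℝ) + 1) / n) ω / G ((m : ℝ) / n) ω - 1| ≤ ζ n}) :
    (∀ᶠ n : ℕ in atTop, ENNReal.ofReal ((1 - 1 / (n : ℝ)^2)^n) ≤ μ (A n)) ∧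
      Tendsto (fun n => μ (A n)) atTop (nhds 1) :=
  stmt9_general (mΩ := mΩ) μ B c hc hmeas hincr_law hincr_indep G hG ζ hζpos hζ0 hliminf A hA
end

section
/- Let f : [−ζ, ζ] → ℝ be convex with f(ζ) = f(−ζ), let T be a random variable with values in [−ζ, ζ] and E[T] = 0, let A be an independent event with P(A) = α ∈ [0,1], and let Z take values ±ζ with probability 1/2 each, independent of T and A. Then E[f(T·1_{A^c} + Z·1_A)] ≥ E[f(T)]. -/
/-!
Convexity and `f ζ = f (-ζ)` give `f ≤ f ζ` on `[-ζ, ζ]`, and `f ∘ Z = f ζ` almost surely.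
Splitting the expectation along `A` and using the independence of `T` and `A`,
`E[f(T 1_{Aᶜ} + Z 1_A)] = (1 - P(A)) E[f(T)] + P(A) f ζ ≥ E[f(T)]`.
-/

open MeasureTheory ProbabilityTheory Set

section Convex

variable {f : ℝ → ℝ} {a b t : ℝ}

lemma ConvexOn.le_max_of_mem_Icc_self (hf : ConvexOn ℝ (Icc a b) f) (ht : t ∈ Icc a b) :
    f t ≤ max (f a) (f b) :=
  hf.le_max_of_mem_Icc (left_mem_Icc.2 (ht.1.trans ht.2)) (right_mem_Icc.2 (ht.1.trans ht.2)) ht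

/-- Reflect `t` through the midpoint `m` of `[a, b]`: `f m ≤ (f t + f (a + b - t)) / 2`. -/
lemma ConvexOn.two_mul_midpoint_sub_max_le (hf : ConvexOn ℝ (Icc a b) f) (ht : t ∈ Icc a b) :
    2 * f ((a + b) / 2) - max (f a) (f b) ≤ f t := by
  have ht' : a + b - t ∈ Icc a b := ⟨by linarith [ht.2], by linarith [ht.1]⟩
  have hmid := hf.2 ht ht' (by norm_num : (0 : ℝ) ≤ 1 / 2) (by norm_num : (0 : ℝ) ≤ 1 / 2)
    (by norm_num)
  have hreflect := hf.le_max_of_mem_Icc_self ht'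
  simp only [smul_eq_mul] at hmid
  rw [show 1 / 2 * t + 1 / 2 * (a + b - t) = (a + b) / 2 by ring] at hmid
  linarith

lemma ConvexOn.integrable_comp_of_ae_mem_Icc {Ω : Type*} {mΩ : MeasurableSpace Ω}
    {μ : Measure Ω} [IsFiniteMeasure μ] {X : Ω → ℝ} (hf : ConvexOn ℝ (Icc a b) f)
    (hfm : Measurable f) (hX : AEMeasurable X μ) (hXab : ∀ᵐ ω ∂μ, X ω ∈ Icc a b) :
    Integrable (fun ω => f (X ω)) μ := by
  refine .of_bound (hfm.comp_aemeasurable hX).aestronglyMeasurable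
    (max |2 * f ((a + b) / 2) - max (f a) (f b)| |max (f a) (f b)|) ?_
  filter_upwards [hXab] with ω hω
  exact abs_le_max_abs_abs (hf.two_mul_midpoint_sub_max_le hω) (hf.le_max_of_mem_Icc_self hω)

end Convex

section Probability

variable {Ω : Type*} {mΩ : MeasurableSpace Ω} {μ : Measure Ω}

lemma ae_eq_or_eq_of_measure_eq_half [IsProbabilityMeasure μ] {Z : Ω → ℝ} {x y : ℝ}
    (hZ : Measurable Z) (hxy : x ≠ y) (hx : μ {ω | Z ω = x} = 1 / 2)
    (hy : μ {ω | Z ω = y} = 1 / 2) : ∀ᵐ ω ∂μ, Z ω = x ∨ Z ω = y := by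
  have hdisj : Disjoint {ω | Z ω = x} {ω | Z ω = y} :=
    disjoint_left.2 fun ω hωx hωy => hxy (hωx.symm.trans hωy)
  have hmx : MeasurableSet {ω | Z ω = x} := hZ (measurableSet_singleton x)
  have hmy : MeasurableSet {ω | Z ω = y} := hZ (measurableSet_singleton y)
  rw [ae_iff_measure_eq (ofPred_or ▸ hmx.union hmy).nullMeasurableSet, ofPred_or,
    measure_union hdisj hmy, hx, hy, ENNReal.add_halves, measure_univ]

namespace ProbabilityTheory

lemma IndepFun.setIntegral_eq_measureReal_mul {X : Ω → ℝ} {A : Set Ω} (hA : MeasurableSet A)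
    (hX : AEStronglyMeasurable X μ) (hXA : IndepFun X (A.indicator fun _ => (1 : ℝ)) μ) :
    ∫ ω in A, X ω ∂μ = μ.real A * ∫ ω, X ω ∂μ := by
  have hprod := hXA.integral_mul_eq_mul_integral hX
    (measurable_const.indicator hA).aestronglyMeasurable
  rw [integral_indicator_const _ hA, smul_eq_mul, mul_one] at hprod
  rw [← integral_indicator hA, mul_comm, ← hprod]
  congr 1
  ext ω
  by_cases hω : ω ∈ A <;> simp [hω]

end ProbabilityTheory

end Probability

theorem stmt14_general {Ω : Type*} {mΩ : MeasurableSpace Ω} (μ : Measure Ω) [IsProbabilityMeasure μ]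
    (T Z : Ω → ℝ) (hTm : Measurable T) (hZm : Measurable Z)
    (A : Set Ω) (hAm : MeasurableSet A)
    (hindep : iIndepFun
      ![T, Z, A.indicator (fun _ => (1:ℝ))] μ)
    (ζ : ℝ) (hζ : 0 < ζ)
    (f : ℝ → ℝ) (hfm : Measurable f)
    (hfconv : ConvexOn ℝ (Set.Icc (-ζ) ζ) f)
    (hend : f ζ = f (-ζ))
    (hTrange : ∀ᵐ ω ∂μ, T ω ∈ Set.Icc (-ζ) ζ)
    (hZ1 : μ {ω | Z ω = ζ} = 1/2) (hZ2 : μ {ω | Z ω = -ζ} = 1/2) :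
    (∫ ω, f (T ω) ∂μ)
      ≤ ∫ ω, f (Aᶜ.indicator T ω + A.indicator Z ω) ∂μ := by
  classical
  have hle : ∀ t ∈ Icc (-ζ) ζ, f t ≤ f ζ := fun t ht => by
    simpa [hend] using hfconv.le_max_of_mem_Icc_self ht
  have hfT : Integrable (fun ω => f (T ω)) μ :=
    hfconv.integrable_comp_of_ae_mem_Icc hfm hTm.aemeasurable hTrange
  have hfZ : (fun ω => f (Z ω)) =ᵐ[μ] fun _ => f ζ := by
    filter_upwards [ae_eq_or_eq_of_measure_eq_half hZm (by linarith) hZ1 hZ2] with ω hω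
    rcases hω with hω | hω <;> simp [hω, hend]
  have hTA : IndepFun (fun ω => f (T ω)) (A.indicator fun _ => (1 : ℝ)) μ :=
    (hindep.indepFun (show (0 : Fin 3) ≠ 2 by decide)).comp hfm measurable_id
  have hET : ∫ ω, f (T ω) ∂μ ≤ f ζ := by
    simpa using integral_mono_ae hfT (integrable_const (f ζ)) (hTrange.mono fun _ hω => hle _ hω)
  have hsplit : (fun ω => f (Aᶜ.indicator T ω + A.indicator Z ω))
      = A.piecewise (fun ω => f (Z ω)) fun ω => f (T ω) := by
    ext ω
    by_cases hω : ω ∈ A <;> simp [hω]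
  rw [hsplit, integral_piecewise hAm
      ((integrable_congr hfZ).2 (integrable_const _)).integrableOn hfT.integrableOn,
    setIntegral_compl hAm hfT, hTA.setIntegral_eq_measureReal_mul hAm hfT.1,
    setIntegral_congr_ae hAm (hfZ.mono fun _ h _ => h), setIntegral_const, smul_eq_mul]
  linarith [mul_le_mul_of_nonneg_left hET (measureReal_nonneg (μ := μ) (s := A))]

theorem stmt14 {Ω : Type*} {mΩ : MeasurableSpace Ω} (μ : Measure Ω) [IsProbabilityMeasure μ]
    (T Z : Ω → ℝ) (hTm : Measurable T) (hZm : Measurable Z)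
    (A : Set Ω) (hAm : MeasurableSet A)
    (hindep : iIndepFun
      ![T, Z, A.indicator (fun _ => (1:ℝ))] μ)
    (ζ : ℝ) (hζ : 0 < ζ)
    (f : ℝ → ℝ) (hfm : Measurable f)
    (hfconv : ConvexOn ℝ (Set.Icc (-ζ) ζ) f)
    (hend : f ζ = f (-ζ))
    (hTrange : ∀ᵐ ω ∂μ, T ω ∈ Set.Icc (-ζ) ζ)
    (hTmean : ∫ ω, T ω ∂μ = 0)
    (α : ℝ) (hα : α ∈ Set.Icc (0:ℝ) 1) (hPA : μ A = ENNReal.ofReal α)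
    (hZ1 : μ {ω | Z ω = ζ} = 1/2) (hZ2 : μ {ω | Z ω = -ζ} = 1/2) :
    (∫ ω, f (T ω) ∂μ)
      ≤ ∫ ω, f (Aᶜ.indicator T ω + A.indicator Z ω) ∂μ :=
  stmt14_general (mΩ := mΩ) μ T Z hTm hZm A hAm hindep ζ hζ f hfm hfconv hend hTrange hZ1 hZ2
end

section
/- Fix n ∈ ℕ, c > 0, and a positive martingale (S_m)_{m=0}^n with S_0 = 1 satisfying E[(S_{m+1} − S_m)² | F_m] = (exp(c/n) − 1)·S_m² and |S_{m+1}/S_m − 1| ≤ ζ_n a.s. Define T_m = S_m/S_{m−1} − 1 and W_m = log S_m + cm/(2n), and let β_m = −Σ_{k=1}^m (E[log(1 + T_k) | F_{k−1}] + c/(2n)). Then for n large enough that 3(1 − ζ_n) ≥ 1, exp(c/n) − 1 ≤ 2c/n, and exp(c/n) − 1 − c/n ≤ 2c²/n², one has max_{1 ≤ m ≤ n} |β_m| ≤ 2c·ζ_n + c²/n almost surely. -/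
open MeasureTheory ProbabilityTheory Real

/-! Write `T = S (j + 1) / S j - 1` and `a = exp (c / n) - 1`. The martingale property gives
`E[T | ℱ j] = 0` and the variance hypothesis gives `E[T² | ℱ j] = a`. For `|T| ≤ ζ ≤ 2/3` the
remainder of `log (1 + T)` after `T - T² / 2` is a tail of the logarithmic series, dominated by
`|T|³ / (3 (1 - |T|)) ≤ ζ T²`, so `|E[log (1 + T) | ℱ j] + a / 2| ≤ ζ a`. The bounds on
`exp (c / n)` turn this into `2 c ζ / n + c² / n²` per summand of `β m`, and there are at most `n`
summands. -/

theorem abs_log_one_add_sub_self_add_sq_div_two_le {t : ℝ} (ht : |t| < 1) :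
    |log (1 + t) - t + t ^ 2 / 2| ≤ |t| ^ 3 / (3 * (1 - |t|)) := by
  set f : ℕ → ℝ := fun k => (-t) ^ (k + 1) / (k + 1)
  have hf : HasSum f (-log (1 + t)) := by
    simpa using hasSum_pow_div_log_of_abs_lt_one (x := -t) (by rwa [abs_neg])
  have htail : HasSum (fun k => f (k + 2)) (-(log (1 + t) - t + t ^ 2 / 2)) := by
    have h := (hasSum_nat_add_iff' 2).2 hf
    rwa [show -log (1 + t) - ∑ i ∈ Finset.range 2, f i = -(log (1 + t) - t + t ^ 2 / 2) by
      simp only [f, Finset.sum_range_succ, Finset.sum_range_zero]; ring] at h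
  have hgeom : HasSum (fun k : ℕ => |t| ^ 3 / 3 * |t| ^ k) (|t| ^ 3 / (3 * (1 - |t|))) := by
    have h := (hasSum_geometric_of_lt_one (abs_nonneg t) ht).mul_left (|t| ^ 3 / 3)
    rwa [show |t| ^ 3 / 3 * (1 - |t|)⁻¹ = |t| ^ 3 / (3 * (1 - |t|)) by
      rw [← div_eq_mul_inv, div_div]] at h
  have hterm (k : ℕ) : ‖f (k + 2)‖ ≤ |t| ^ 3 / 3 * |t| ^ k := by
    have hk : (3 : ℝ) ≤ (k + 2 : ℕ) + 1 := by push_cast; linarith [k.cast_nonneg (α := ℝ)]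
    rw [Real.norm_eq_abs, abs_div, abs_pow, abs_neg, abs_of_pos (a := (k + 2 : ℕ) + (1 : ℝ))
      (by linarith), div_le_iff₀ (by linarith)]
    calc |t| ^ (k + 2 + 1) = |t| ^ 3 / 3 * |t| ^ k * 3 := by ring
      _ ≤ |t| ^ 3 / 3 * |t| ^ k * ((k + 2 : ℕ) + 1) := by gcongr
  have h := htail.norm_le_of_bounded hgeom hterm
  rwa [Real.norm_eq_abs, abs_neg] at h

theorem abs_log_one_add_sub_self_add_sq_div_two_le_mul_sq {t ζ : ℝ} (ht : |t| ≤ ζ)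
    (hζ : ζ ≤ 2 / 3) : |log (1 + t) - t + t ^ 2 / 2| ≤ ζ * t ^ 2 := by
  have ht1 : |t| < 1 := by linarith
  calc |log (1 + t) - t + t ^ 2 / 2| ≤ |t| ^ 3 / (3 * (1 - |t|)) :=
        abs_log_one_add_sub_self_add_sq_div_two_le ht1
    _ ≤ |t| * t ^ 2 := by
        rw [div_le_iff₀ (by linarith), ← sq_abs t]
        nlinarith [pow_nonneg (abs_nonneg t) 3]
    _ ≤ ζ * t ^ 2 := by gcongr

section CondExp

variable {Ω : Type*} {m mΩ : MeasurableSpace Ω} {μ : Measure Ω}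

theorem condExp_div_of_stronglyMeasurable {X Y : Ω → ℝ} (hX : StronglyMeasurable[m] X)
    (hXY : Integrable (fun ω => Y ω / X ω) μ) (hY : Integrable Y μ) :
    μ[fun ω => Y ω / X ω | m] =ᵐ[μ] fun ω => μ[Y | m] ω / X ω := by
  have hdiv : (fun ω => Y ω / X ω) = X⁻¹ * Y := funext fun ω => div_eq_inv_mul (Y ω) (X ω)
  rw [hdiv] at hXY ⊢
  filter_upwards [condExp_mul_of_stronglyMeasurable_left hX.measurable.inv.stronglyMeasurable
    hXY hY] with ω h
  rw [h, Pi.mul_apply, Pi.inv_apply, inv_mul_eq_div]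

theorem abs_condExp_log_one_add_add_half_le [IsFiniteMeasure μ] {T V : Ω → ℝ} {ζ : ℝ}
    (hT : AEMeasurable T μ) (hTζ : ∀ᵐ ω ∂μ, |T ω| ≤ ζ) (hζ : ζ ≤ 2 / 3)
    (hmean : μ[T | m] =ᵐ[μ] 0) (hvar : μ[fun ω => T ω ^ 2 | m] =ᵐ[μ] V) :
    ∀ᵐ ω ∂μ, |μ[fun ω => log (1 + T ω) | m] ω + V ω / 2| ≤ ζ * V ω := by
  set r : Ω → ℝ := fun ω => log (1 + T ω) - T ω + T ω ^ 2 / 2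
  have hr : ∀ᵐ ω ∂μ, |r ω| ≤ ζ * T ω ^ 2 := by
    filter_upwards [hTζ] with ω h
    exact abs_log_one_add_sub_self_add_sq_div_two_le_mul_sq h hζ
  have hT2ζ : ∀ᵐ ω ∂μ, T ω ^ 2 ≤ ζ ^ 2 := by
    filter_upwards [hTζ] with ω h
    exact sq_le_sq' (abs_le.1 h).1 (abs_le.1 h).2
  have intT : Integrable T μ :=
    .of_bound hT.aestronglyMeasurable ζ (by simpa only [Real.norm_eq_abs] using hTζ)
  have intT2 : Integrable (fun ω => T ω ^ 2) μ :=
    .of_bound (hT.pow_const 2).aestronglyMeasurable (ζ ^ 2) (by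
      filter_upwards [hT2ζ] with ω h
      rwa [Real.norm_eq_abs, abs_of_nonneg (sq_nonneg _)])
  have intr : Integrable r μ := by
    refine .of_bound ?_ (ζ * ζ ^ 2) ?_
    · exact (((measurable_log.comp_aemeasurable (hT.const_add 1)).sub hT).add
        ((hT.pow_const 2).div_const 2)).aestronglyMeasurable
    · filter_upwards [hr, hT2ζ, hTζ] with ω h h2 h3
      rw [Real.norm_eq_abs]
      exact h.trans (mul_le_mul_of_nonneg_left h2 ((abs_nonneg _).trans h3))
  have hrV : ∀ᵐ ω ∂μ, |μ[r | m] ω| ≤ ζ * V ω := by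
    filter_upwards [abs_condExp_ae_le_condExp_abs (m := m) (μ := μ) r,
      condExp_mono (m := m) intr.abs (intT2.const_mul ζ) hr,
      condExp_smul (m := m) (μ := μ) ζ (fun ω => T ω ^ 2), hvar] with ω h1 h2 h3 h4
    calc |μ[r | m] ω| ≤ μ[(|r|) | m] ω := h1
      _ ≤ μ[fun ω => ζ * T ω ^ 2 | m] ω := h2
      _ = ζ * V ω := by rw [← h4]; exact h3
  have hlog : (fun ω => log (1 + T ω)) = r + T - (2⁻¹ : ℝ) • fun ω => T ω ^ 2 := by
    funext ω; simp only [r, Pi.add_apply, Pi.sub_apply, Pi.smul_apply, smul_eq_mul]; ring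
  have hsplit : μ[fun ω => log (1 + T ω) | m] =ᵐ[μ]
      μ[r | m] + μ[T | m] - (2⁻¹ : ℝ) • μ[fun ω => T ω ^ 2 | m] := by
    rw [hlog]
    exact (condExp_sub (intr.add intT) (intT2.smul _) m).trans
      ((condExp_add intr intT m).sub (condExp_smul _ _ m))
  filter_upwards [hsplit, hrV, hmean, hvar] with ω hL h hT0 hTV
  simp only [hL, Pi.add_apply, Pi.sub_apply, Pi.smul_apply, smul_eq_mul, hT0, hTV,
    Pi.zero_apply]
  convert h using 2
  ring

end CondExp

section Martingale

variable {Ω : Type*} {mΩ : MeasurableSpace Ω} {μ : Measure Ω} {ℱ : Filtration ℕ mΩ}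
  {S : ℕ → Ω → ℝ} {j : ℕ}

theorem MeasureTheory.Martingale.condExp_ratio_sub_one [IsFiniteMeasure μ]
    (hS : Martingale S ℱ μ) (hne : ∀ᵐ ω ∂μ, S j ω ≠ 0)
    (hint : Integrable (fun ω => S (j + 1) ω / S j ω) μ) :
    μ[fun ω => S (j + 1) ω / S j ω - 1 | ℱ j] =ᵐ[μ] 0 := by
  have hratio : μ[fun ω => S (j + 1) ω / S j ω | ℱ j] =ᵐ[μ] 1 := by
    filter_upwards [condExp_div_of_stronglyMeasurable (hS.stronglyAdapted j) hint
      (hS.integrable _), hS.condExp_ae_eq j.le_succ, hne] with ω h hSj hne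
    rw [h, hSj, div_self hne, Pi.one_apply]
  rw [show (fun ω => S (j + 1) ω / S j ω - 1) =
    (fun ω => S (j + 1) ω / S j ω) - fun _ => (1 : ℝ) from rfl]
  filter_upwards [condExp_sub hint (integrable_const 1) (ℱ j), hratio] with ω h h1
  rw [h, Pi.sub_apply, h1, condExp_const (ℱ.le j)]
  simp

theorem condExp_ratio_sub_one_sq [NeZero μ] {a : ℝ} (hS : StronglyAdapted ℱ S)
    (hne : ∀ᵐ ω ∂μ, S j ω ≠ 0) (ha : a ≠ 0)
    (hvar : μ[fun ω => (S (j + 1) ω - S j ω) ^ 2 | ℱ j] =ᵐ[μ] fun ω => a * S j ω ^ 2)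
    (hint : Integrable (fun ω => (S (j + 1) ω / S j ω - 1) ^ 2) μ) :
    μ[fun ω => (S (j + 1) ω / S j ω - 1) ^ 2 | ℱ j] =ᵐ[μ] fun _ => a := by
  -- otherwise the left side of `hvar` would be the junk value `0`, while `a * S j ^ 2 ≠ 0` a.e.
  have hint_sq : Integrable (fun ω => (S (j + 1) ω - S j ω) ^ 2) μ := by
    by_contra h
    rw [condExp_of_not_integrable h] at hvar
    obtain ⟨ω, h0, hω⟩ := (hvar.and hne).exists
    exact mul_ne_zero ha (pow_ne_zero 2 hω) h0.symm
  have heq : (fun ω => (S (j + 1) ω / S j ω - 1) ^ 2) =ᵐ[μ]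
      fun ω => (S (j + 1) ω - S j ω) ^ 2 / S j ω ^ 2 := by
    filter_upwards [hne] with ω hω
    field_simp
  filter_upwards [condExp_congr_ae heq, condExp_div_of_stronglyMeasurable
    ((hS j).measurable.pow_const 2).stronglyMeasurable (hint.congr heq) hint_sq, hvar, hne]
    with ω h h' hv hω
  rw [h, h', hv]
  field_simp

theorem MeasureTheory.Martingale.abs_condExp_log_ratio_add_half_le [IsFiniteMeasure μ]
    [NeZero μ] {a ζ : ℝ} (hS : Martingale S ℱ μ) (hne : ∀ᵐ ω ∂μ, S j ω ≠ 0) (ha : a ≠ 0)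
    (hvar : μ[fun ω => (S (j + 1) ω - S j ω) ^ 2 | ℱ j] =ᵐ[μ] fun ω => a * S j ω ^ 2)
    (hζ : ζ ≤ 2 / 3) (hbound : ∀ᵐ ω ∂μ, |S (j + 1) ω / S j ω - 1| ≤ ζ) :
    ∀ᵐ ω ∂μ, |μ[fun ω => log (1 + (S (j + 1) ω / S j ω - 1)) | ℱ j] ω + a / 2| ≤ ζ * a := by
  have hSm (i : ℕ) : Measurable (S i) := ((hS.stronglyAdapted i).mono (ℱ.le i)).measurable
  have hratio : Measurable fun ω => S (j + 1) ω / S j ω := (hSm _).div (hSm _)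
  have hT : Measurable fun ω => S (j + 1) ω / S j ω - 1 := hratio.sub_const 1
  have hint_ratio : Integrable (fun ω => S (j + 1) ω / S j ω) μ := by
    refine .of_bound hratio.aestronglyMeasurable (ζ + 1) ?_
    filter_upwards [hbound] with ω h
    have := abs_sub_abs_le_abs_sub (S (j + 1) ω / S j ω) 1
    rw [abs_one] at this
    rw [Real.norm_eq_abs]
    linarith
  have hint_sq : Integrable (fun ω => (S (j + 1) ω / S j ω - 1) ^ 2) μ := by
    refine .of_bound (hT.pow_const 2).aestronglyMeasurable (ζ ^ 2) ?_
    filter_upwards [hbound] with ω h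
    rw [Real.norm_eq_abs, abs_pow]
    exact pow_le_pow_left₀ (abs_nonneg _) h 2
  exact abs_condExp_log_one_add_add_half_le hT.aemeasurable hbound hζ
    (hS.condExp_ratio_sub_one hne hint_ratio)
    (condExp_ratio_sub_one_sq hS.stronglyAdapted hne ha hvar hint_sq)

end Martingale

theorem abs_add_half_le_of_abs_add_half_le {E a x ζ : ℝ} (hζ : 0 ≤ ζ) (hxa : x ≤ a)
    (ha2 : a ≤ 2 * x) (ha3 : a - x ≤ 2 * x ^ 2) (hE : |E + a / 2| ≤ ζ * a) :
    |E + x / 2| ≤ 2 * ζ * x + x ^ 2 := by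
  calc |E + x / 2| = |(E + a / 2) - (a - x) / 2| := by ring_nf
    _ ≤ |E + a / 2| + |(a - x) / 2| := abs_sub _ _
    _ = |E + a / 2| + (a - x) / 2 := by rw [abs_of_nonneg (a := (a - x) / 2) (by linarith)]
    _ ≤ 2 * ζ * x + x ^ 2 := by nlinarith [mul_le_mul_of_nonneg_left ha2 hζ]

theorem stmt17_general {Ω : Type*} {mΩ : MeasurableSpace Ω} (μ : Measure Ω) [IsProbabilityMeasure μ]
    (n : ℕ) (c : ℝ) (hc : 0 < c)
    (ζ : ℝ) (hζ0 : 0 < ζ)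
    (ℱ : Filtration ℕ mΩ) (S : ℕ → Ω → ℝ)
    (hmart : Martingale S ℱ μ)
    (hpos : ∀ m, ∀ᵐ ω ∂μ, 0 < S m ω)
    (hvar : ∀ m < n, μ[fun ω => (S (m+1) ω - S m ω)^2 | ℱ m]
        =ᵐ[μ] fun ω => (Real.exp (c / n) - 1) * (S m ω)^2)
    (hzc : ∀ m < n, ∀ᵐ ω ∂μ, |S (m+1) ω / S m ω - 1| ≤ ζ)
    (h1 : 1 ≤ 3 * (1 - ζ))
    (h2 : Real.exp (c / n) - 1 ≤ 2 * c / n)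
    (h3 : Real.exp (c / n) - 1 - c / n ≤ 2 * c^2 / n^2)
    (β : ℕ → Ω → ℝ)
    (hβ : ∀ m, β m = fun ω =>
      - ∑ k ∈ Finset.Icc 1 m,
        ((μ[fun ω' => Real.log (1 + (S k ω' / S (k-1) ω' - 1)) | ℱ (k-1)]) ω + c / (2*n))) :
    ∀ᵐ ω ∂μ, ∀ m, 1 ≤ m → m ≤ n → |β m ω| ≤ 2 * c * ζ + c^2 / n := by
  set B := 2 * ζ * (c / n) + (c / n) ^ 2 with hB
  have hstep : ∀ᵐ ω ∂μ, ∀ j < n,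
      |μ[fun ω' => log (1 + (S (j + 1) ω' / S j ω' - 1)) | ℱ j] ω + c / (2 * n)| ≤ B := by
    refine ae_all_iff.2 fun j => ?_
    by_cases hj : j < n
    · have hcn : 0 < c / n := div_pos hc (by exact_mod_cast j.zero_le.trans_lt hj)
      have hxa : c / n ≤ exp (c / n) - 1 := by linarith [add_one_le_exp (c / n)]
      have ha : 0 < exp (c / n) - 1 := hcn.trans_le hxa
      filter_upwards [hmart.abs_condExp_log_ratio_add_half_le ((hpos j).mono fun _ h => h.ne')
        ha.ne' (hvar j hj) (by linarith) (hzc j hj)] with ω h _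
      rw [show c / (2 * n) = c / n / 2 by ring]
      refine abs_add_half_le_of_abs_add_half_le hζ0.le hxa (by rwa [mul_div_assoc] at h2)
        (by rwa [mul_div_assoc, ← div_pow] at h3) h
    · exact .of_forall fun _ h => absurd h hj
  filter_upwards [hstep] with ω hω m hm1 hmn
  have hn : (0 : ℝ) < n := by exact_mod_cast hm1.trans hmn
  calc |β m ω| ≤ ∑ k ∈ Finset.Icc 1 m,
        |μ[fun ω' => log (1 + (S k ω' / S (k - 1) ω' - 1)) | ℱ (k - 1)] ω + c / (2 * n)| := by
        rw [hβ, abs_neg]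
        exact Finset.abs_sum_le_sum_abs _ _
    _ ≤ ∑ _k ∈ Finset.Icc 1 m, B := Finset.sum_le_sum fun k hk => by
        obtain ⟨hk1, hkm⟩ := Finset.mem_Icc.1 hk
        obtain ⟨j, rfl⟩ := Nat.exists_eq_add_of_le' hk1
        exact hω j (by omega)
    _ = m * B := by simp
    _ ≤ n * B := by gcongr
    _ = 2 * c * ζ + c ^ 2 / n := by rw [hB]; field_simp

theorem stmt17 {Ω : Type*} {mΩ : MeasurableSpace Ω} (μ : Measure Ω) [IsProbabilityMeasure μ]
    (n : ℕ) (hn : 0 < n) (c : ℝ) (hc : 0 < c)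
    (ζ : ℝ) (hζ0 : 0 < ζ) (hζ1 : ζ < 2/3)
    (ℱ : Filtration ℕ mΩ) (S : ℕ → Ω → ℝ)
    (hmart : Martingale S ℱ μ) (hS0 : ∀ ω, S 0 ω = 1)
    (hpos : ∀ m, ∀ᵐ ω ∂μ, 0 < S m ω)
    (hvar : ∀ m < n, μ[fun ω => (S (m+1) ω - S m ω)^2 | ℱ m]
        =ᵐ[μ] fun ω => (Real.exp (c / n) - 1) * (S m ω)^2)
    (hzc : ∀ m < n, ∀ᵐ ω ∂μ, |S (m+1) ω / S m ω - 1| ≤ ζ)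
    (h1 : 1 ≤ 3 * (1 - ζ))
    (h2 : Real.exp (c / n) - 1 ≤ 2 * c / n)
    (h3 : Real.exp (c / n) - 1 - c / n ≤ 2 * c^2 / n^2)
    (β : ℕ → Ω → ℝ)
    (hβ : ∀ m, β m = fun ω =>
      - ∑ k ∈ Finset.Icc 1 m,
        ((μ[fun ω' => Real.log (1 + (S k ω' / S (k-1) ω' - 1)) | ℱ (k-1)]) ω + c / (2*n))) :
    ∀ᵐ ω ∂μ, ∀ m, 1 ≤ m → m ≤ n → |β m ω| ≤ 2 * c * ζ + c^2 / n :=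
  stmt17_general μ n c hc ζ hζ0 ℱ S hmart hpos hvar hzc h1 h2 h3 β hβ
end
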